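/- arXiv:1512.02317 — 6 statements merged into one kernel-verified Lean document; each statement's English description precedes it below -/
import Mathlib

section
/- If G′ is a connected subgraph of a connected directed graph G (obtained from G by deleting some edges and vertices), then π(G) ≥ π(G′). -/
open scoped Classical

namespace Money

/-- A finite simple directed graph without loops, on a subset of `Fin n`. -/
structure Digraph (n : ℕ) where
  verts : Finset (Fin n)
  edges : Finset (Fin n × Fin n)
  mem_verts : ∀ e ∈ edges, e.1 ∈ verts ∧ e.2 ∈ verts
  no_loops : ∀ e ∈ edges, e.1 ≠ e.2

namespace Digraph

variable {n : ℕ}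

/-- There is a directed path (possibly empty) from `i` to `j`. -/
def Reaches (G : Digraph n) : Fin n → Fin n → Prop :=
  Relation.ReflTransGen fun a b => (a, b) ∈ G.edges

/-- `G` is connected: nonempty, and any vertex reaches any other by a directed path. -/
def Connected (G : Digraph n) : Prop :=
  G.verts.Nonempty ∧ ∀ i ∈ G.verts, ∀ j ∈ G.verts, G.Reaches i j

/-- `T` is (the edge set of) a spanning `i`-tree of `G`: every vertex `j ≠ i`
has a unique directed path in `T` to `i`. -/
def IsSpanTree (G : Digraph n) (i : Fin n) (T : Finset (Fin n × Fin n)) : Prop :=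
  T ⊆ G.edges ∧
  (∀ j ∈ G.verts, j ≠ i → ∃! k, (j, k) ∈ T) ∧
  (∀ k, (i, k) ∉ T) ∧
  ∀ j ∈ G.verts, Relation.ReflTransGen (fun a b => (a, b) ∈ T) j i

/-- The spanning-tree price of vertex `i` at edge weights `b`. -/
noncomputable def price (G : Digraph n) (i : Fin n) (b : Fin n × Fin n → ℝ) : ℝ :=
  ∑ T ∈ G.edges.powerset.filter (fun T => G.IsSpanTree i T), ∏ e ∈ T, b e

/-- The price-ratio function `b ↦ p_i(b)/p_j(b)`. -/
noncomputable def priceRatio (G : Digraph n) (i j : Fin n) (b : Fin n × Fin n → ℝ) : ℝ :=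
  G.price i b / G.price j b

/-- An edge coordinate `e` is influential for `f` (as a function on positive
weight vectors on the edges of `G`). -/
def Influential (G : Digraph n) (f : (Fin n × Fin n → ℝ) → ℝ) (e : Fin n × Fin n) : Prop :=
  ∃ b b' : Fin n × Fin n → ℝ,
    (∀ e' ∈ G.edges, 0 < b e') ∧ (∀ e' ∈ G.edges, 0 < b' e') ∧
    (∀ e', e' ≠ e → b e' = b' e') ∧ f b ≠ f b'

/-- `π_ij(G)`: the number of influential edges of the price-ratio `p_i/p_j`. -/
noncomputable def priceCplxPair (G : Digraph n) (i j : Fin n) : ℕ :=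
  (G.edges.filter (fun e => G.Influential (G.priceRatio i j) e)).card

/-- The price complexity `π(G) = max_{i ≠ j} π_ij(G)`. -/
noncomputable def priceComplexity (G : Digraph n) : ℕ :=
  ((G.verts ×ˢ G.verts).filter fun p => p.1 ≠ p.2).sup fun p => G.priceCplxPair p.1 p.2

/-- There is a directed walk of length `k` from `i` to `j`. -/
def HasWalk (G : Digraph n) (i j : Fin n) (k : ℕ) : Prop :=
  ∃ g : ℕ → Fin n, g 0 = i ∧ g k = j ∧ ∀ t < k, (g t, g (t + 1)) ∈ G.edges

/-- Length of a shortest directed path from `i` to `j`. -/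
noncomputable def dist (G : Digraph n) (i j : Fin n) : ℕ := sInf {k | G.HasWalk i j k}

/-- The time complexity `τ(G)`: the diameter of `G`. -/
noncomputable def timeComplexity (G : Digraph n) : ℕ :=
  ((G.verts ×ˢ G.verts).filter fun p => p.1 ≠ p.2).sup fun p => G.dist p.1 p.2

def outdeg (G : Digraph n) (v : Fin n) : ℕ := (G.edges.filter fun e => e.1 = v).card

def indeg (G : Digraph n) (v : Fin n) : ℕ := (G.edges.filter fun e => e.2 = v).card

/-- A directed cycle: connected, and every vertex has exactly one outgoing
and one incoming edge. -/
def IsCycleGraph (G : Digraph n) : Prop :=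
  G.Connected ∧ ∀ v ∈ G.verts, G.outdeg v = 1 ∧ G.indeg v = 1

/-- `P` is a (simple) directed path from `s` to `t`, `s ≠ t`. -/
def IsPathGraph (P : Digraph n) (s t : Fin n) : Prop :=
  s ≠ t ∧ s ∈ P.verts ∧ t ∈ P.verts ∧
  (∀ v ∈ P.verts, P.Reaches s v ∧ P.Reaches v t) ∧
  (∀ v ∈ P.verts, v ≠ t → P.outdeg v = 1) ∧ P.outdeg t = 0 ∧
  (∀ v ∈ P.verts, v ≠ s → P.indeg v = 1) ∧ P.indeg s = 0

/-- Union of two digraphs. -/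
def union (G H : Digraph n) : Digraph n where
  verts := G.verts ∪ H.verts
  edges := G.edges ∪ H.edges
  mem_verts := by
    intro e he
    rcases Finset.mem_union.mp he with h | h
    · exact ⟨Finset.mem_union_left _ (G.mem_verts e h).1,
        Finset.mem_union_left _ (G.mem_verts e h).2⟩
    · exact ⟨Finset.mem_union_right _ (H.mem_verts e h).1,
        Finset.mem_union_right _ (H.mem_verts e h).2⟩
  no_loops := by
    intro e he
    rcases Finset.mem_union.mp he with h | h
    · exact G.no_loops e h
    · exact H.no_loops e h

/-- A chorded cycle: a directed cycle `C` together with a directed path `P`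
joining two distinct vertices of `C`, otherwise disjoint from `C`. -/
def IsChordedCycle (G : Digraph n) : Prop :=
  ∃ (C P : Digraph n) (s t : Fin n),
    C.IsCycleGraph ∧ P.IsPathGraph s t ∧ s ∈ C.verts ∧ t ∈ C.verts ∧
    P.verts ∩ C.verts = {s, t} ∧ Disjoint C.edges P.edges ∧ G = C.union P

/-- A `k`-rose: `k` directed cycles sharing a single common vertex, otherwise
pairwise disjoint.  A `0`-rose is a single vertex. -/
def IsRose (G : Digraph n) (k : ℕ) : Prop :=
  ∃ (j : Fin n) (C : Fin k → Digraph n),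
    (∀ i, (C i).IsCycleGraph) ∧ (∀ i, j ∈ (C i).verts) ∧
    (∀ i i', i ≠ i' → (C i).verts ∩ (C i').verts = {j}) ∧
    G.verts = insert j (Finset.univ.biUnion fun i => (C i).verts) ∧
    G.edges = Finset.univ.biUnion fun i => (C i).edges

/-- `H` is a subgraph of `G` (obtained by deleting some edges and vertices). -/
def IsSubgraph (H G : Digraph n) : Prop := H.verts ⊆ G.verts ∧ H.edges ⊆ G.edges

/-- The circuit rank `c(G) = e(G) - v(G) + 1`. -/
def circuitRank (G : Digraph n) : ℤ := (G.edges.card : ℤ) - (G.verts.card : ℤ) + 1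

/-- The edge `ij` is collapsible. -/
def Collapsible (G : Digraph n) (i j : Fin n) : Prop :=
  (i, j) ∈ G.edges ∧ G.outdeg i = 1 ∧ (j, i) ∉ G.edges ∧
  ∀ k, ¬((k, i) ∈ G.edges ∧ (k, j) ∈ G.edges)

/-- `G` is rigid: no collapsible edges. -/
def Rigid (G : Digraph n) : Prop := ∀ i j, ¬G.Collapsible i j

/-- `k` covers the ordinary vertex `i` (whose unique outgoing edge is `ij`). -/
def Covers (G : Digraph n) (k i : Fin n) : Prop :=
  G.outdeg i = 1 ∧ ∃ j, (i, j) ∈ G.edges ∧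
    (((k, i) ∈ G.edges ∧ (k, j) ∈ G.edges) ∨ (k = j ∧ (j, i) ∈ G.edges))

/-- A star on all of `Fin n`: a center joined to every other vertex by a pair
of oppositely directed edges, and no other edges. -/
def IsStar (G : Digraph n) : Prop :=
  ∃ c : Fin n, G.verts = Finset.univ ∧
    G.edges = Finset.univ.filter fun e => (e.1 = c ∧ e.2 ≠ c) ∨ (e.2 = c ∧ e.1 ≠ c)

/-- The complete directed graph on all of `Fin n`. -/
def IsComplete (G : Digraph n) : Prop :=
  G.verts = Finset.univ ∧ G.edges = Finset.univ.filter fun e => e.1 ≠ e.2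

/-- A chorded triangle: a 3-cycle `u → v → w → u` together with the
bidirected pair between `u` and `w`. -/
def IsChordedTriangle (T : Digraph n) : Prop :=
  ∃ u v w : Fin n, u ≠ v ∧ v ≠ w ∧ u ≠ w ∧
    T.verts = {u, v, w} ∧ T.edges = {(u, w), (w, u), (u, v), (v, w)}

end Digraph

end Money

open Money Money.Digraph

/-!
Put weight `ε` on the edges of `G` outside `G'`. Every spanning `i`-tree of `G` uses at least
`m = |V(G) \ V(G')|` such edges, one leaving each vertex outside `G'`, and those using exactly
`m` are the unions of a spanning `i`-tree of `G'` with a forest hanging the remaining vertices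
on `V(G')`. Hence `p_i^G = ε^m (N p_i^{G'} + O(ε))`, where `N > 0` counts these forests, and
`p_i^G / p_j^G → p_i^{G'} / p_j^{G'}` as `ε → 0⁺`. So if changing the weight of an edge
changes `p_i^{G'} / p_j^{G'}`, it also changes `p_i^G / p_j^G` for small `ε`, and
`π_ij(G') ≤ π_ij(G)`.
-/

namespace Relation.ReflTransGen

variable {α : Type*} {r r' : α → α → Prop} {a b : α}

lemma exists_first_mem (h : ReflTransGen r a b) {s : Set α} (hb : b ∈ s) :
    ∃ c ∈ s, ReflTransGen (fun x y => r x y ∧ x ∉ s) a c := by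
  induction h using head_induction_on with
  | refl => exact ⟨b, hb, refl⟩
  | @head x y hxy _ ih =>
    by_cases hx : x ∈ s
    · exact ⟨x, hx, refl⟩
    · obtain ⟨c, hc, hyc⟩ := ih
      exact ⟨c, hc, head ⟨hxy, hx⟩ hyc⟩

lemma exists_rel_of_notMem_of_mem (h : ReflTransGen r a b) {s : Set α} (ha : a ∉ s)
    (hb : b ∈ s) : ∃ x y, x ∉ s ∧ y ∈ s ∧ r x y := by
  obtain ⟨c, hc, hac⟩ := h.exists_first_mem hb
  rcases hac.cases_tail with rfl | ⟨x, -, hxc, hx⟩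
  · exact absurd hc ha
  · exact ⟨x, c, hx, hc, hxc⟩

lemma mono_of_mem {s : Set α} (h : ReflTransGen r a b) (ha : a ∈ s)
    (hr : ∀ x y, r x y → x ∈ s → r' x y ∧ y ∈ s) : ReflTransGen r' a b := by
  induction h using head_induction_on with
  | refl => exact refl
  | @head x y hxy _ ih =>
    obtain ⟨hxy', hy⟩ := hr x y hxy ha
    exact head hxy' (ih hy)

end Relation.ReflTransGen

namespace Money

open Finset Relation

variable {n : ℕ}

/-- `F` hangs every vertex of `S \ R` on the roots `R`. For `R = {i}` and `S = V(G)` these are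
exactly the spanning `i`-trees of `G` (`Digraph.isSpanTree_iff`). -/
structure IsHangingForest (E : Finset (Fin n × Fin n)) (R S : Finset (Fin n))
    (F : Finset (Fin n × Fin n)) : Prop where
  subset : F ⊆ E
  fst_mem : ∀ e ∈ F, e.1 ∈ S \ R
  existsUnique_out : ∀ v ∈ S \ R, ∃! w, (v, w) ∈ F
  exists_root : ∀ v ∈ S \ R, ∃ u ∈ R, ReflTransGen (fun a b => (a, b) ∈ F) v u

lemma reflTransGen_mem_mono {F F' : Finset (Fin n × Fin n)} (h : F ⊆ F') {a b : Fin n}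
    (hab : ReflTransGen (fun a b => (a, b) ∈ F) a b) :
    ReflTransGen (fun a b => (a, b) ∈ F') a b :=
  ReflTransGen.mono (fun _ _ hx => h hx) _ _ hab

namespace IsHangingForest

variable {E E' F F' : Finset (Fin n × Fin n)} {R R' S S' V : Finset (Fin n)}

lemma empty : IsHangingForest E R R ∅ :=
  ⟨empty_subset _, by simp, by simp, by simp⟩

lemma insert (hF : IsHangingForest E R S F) {u w : Fin n} (hu : u ∉ S) (huR : u ∉ R)
    (hw : w ∈ S) (huw : (u, w) ∈ E) :
    IsHangingForest E R (insert u S) (insert (u, w) F) where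
  subset := insert_subset huw hF.subset
  fst_mem e he := by
    rcases mem_insert.mp he with rfl | he
    · simp [huR]
    · exact sdiff_subset_sdiff (subset_insert _ _) le_rfl (hF.fst_mem e he)
  existsUnique_out v hv := by
    rcases mem_insert.mp (mem_sdiff.mp hv).1 with rfl | hvS
    · refine ⟨w, mem_insert_self _ _, fun k hk => ?_⟩
      rcases mem_insert.mp hk with h | h
      · exact (Prod.mk.inj h).2
      · exact absurd (mem_sdiff.mp (hF.fst_mem _ h)).1 hu
    · have hvR := (mem_sdiff.mp hv).2
      obtain ⟨k, hk, hk_unique⟩ := hF.existsUnique_out v (mem_sdiff.mpr ⟨hvS, hvR⟩)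
      refine ⟨k, mem_insert_of_mem hk, fun k' hk' => ?_⟩
      rcases mem_insert.mp hk' with h | h
      · exact absurd ((Prod.mk.inj h).1 ▸ hvS) hu
      · exact hk_unique k' h
  exists_root v hv := by
    rcases mem_insert.mp (mem_sdiff.mp hv).1 with rfl | hvS
    · by_cases hwR : w ∈ R
      · exact ⟨w, hwR, .single (mem_insert_self _ _)⟩
      · obtain ⟨r, hr, hwr⟩ := hF.exists_root w (mem_sdiff.mpr ⟨hw, hwR⟩)
        exact ⟨r, hr, .head (mem_insert_self _ _)
          (reflTransGen_mem_mono (subset_insert _ _) hwr)⟩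
    · obtain ⟨r, hr, hvr⟩ := hF.exists_root v (mem_sdiff.mpr ⟨hvS, (mem_sdiff.mp hv).2⟩)
      exact ⟨r, hr, reflTransGen_mem_mono (subset_insert _ _) hvr⟩

lemma exists_of_forall_reach (hF : IsHangingForest E R S F) (hRS : R ⊆ S) (hSV : S ⊆ V)
    (hE : ∀ e ∈ E, e.1 ∈ V)
    (hreach : ∀ v ∈ V, ∃ u ∈ R, ReflTransGen (fun a b => (a, b) ∈ E) v u) :
    ∃ F', IsHangingForest E R V F' := by
  induction hk : (V \ S).card generalizing S F with
  | zero =>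
    obtain rfl : S = V := hSV.antisymm
      (sdiff_eq_empty_iff_subset.mp (card_eq_zero.mp hk))
    exact ⟨F, hF⟩
  | succ k ih =>
    obtain ⟨v, hv⟩ := card_pos.mp (by omega : 0 < (V \ S).card)
    obtain ⟨hvV, hvS⟩ := mem_sdiff.mp hv
    obtain ⟨r, hr, hvr⟩ := hreach v hvV
    obtain ⟨u, w, hu, hw, huw⟩ :=
      hvr.exists_rel_of_notMem_of_mem (s := (S : Set (Fin n))) hvS (hRS hr)
    have huV := hE _ huw
    refine ih (hF.insert hu (fun h => hu (hRS h)) hw huw)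
      (hRS.trans (subset_insert _ _)) (insert_subset huV hSV) ?_
    rw [sdiff_insert, card_erase_of_mem (mem_sdiff.mpr ⟨huV, hu⟩), hk,
      Nat.add_sub_cancel]

lemma filter_fst_notMem (hF : IsHangingForest E R S F) (hR : R ⊆ R') :
    IsHangingForest E R' S (F.filter fun e => e.1 ∉ R') where
  subset := (filter_subset _ _).trans hF.subset
  fst_mem e he := by
    obtain ⟨heF, heR'⟩ := mem_filter.mp he
    exact mem_sdiff.mpr ⟨(mem_sdiff.mp (hF.fst_mem e heF)).1, heR'⟩
  existsUnique_out v hv := by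
    obtain ⟨hvS, hvR'⟩ := mem_sdiff.mp hv
    obtain ⟨w, hw, hw_unique⟩ :=
      hF.existsUnique_out v (mem_sdiff.mpr ⟨hvS, fun h => hvR' (hR h)⟩)
    exact ⟨w, mem_filter.mpr ⟨hw, hvR'⟩,
      fun w' hw' => hw_unique w' (mem_filter.mp hw').1⟩
  exists_root v hv := by
    obtain ⟨hvS, hvR'⟩ := mem_sdiff.mp hv
    obtain ⟨u, hu, hvu⟩ :=
      hF.exists_root v (mem_sdiff.mpr ⟨hvS, fun h => hvR' (hR h)⟩)
    obtain ⟨c, hc, hvc⟩ := hvu.exists_first_mem (s := (R' : Set (Fin n))) (hR hu)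
    exact ⟨c, hc, ReflTransGen.mono
      (fun _ _ h => mem_filter.mpr ⟨h.1, h.2⟩) _ _ hvc⟩

lemma inter (hF : IsHangingForest E R S F) (hS' : S' ⊆ S)
    (hE' : ∀ e ∈ E', e.1 ∈ S' ∧ e.2 ∈ S') (hFE' : ∀ e ∈ F, e.1 ∈ S' → e ∈ E') :
    IsHangingForest E' R S' (F ∩ E') where
  subset := inter_subset_right
  fst_mem e he := by
    obtain ⟨heF, heE'⟩ := mem_inter.mp he
    exact mem_sdiff.mpr ⟨(hE' e heE').1, (mem_sdiff.mp (hF.fst_mem e heF)).2⟩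
  existsUnique_out v hv := by
    obtain ⟨hvS', hvR⟩ := mem_sdiff.mp hv
    obtain ⟨w, hw, hw_unique⟩ := hF.existsUnique_out v (mem_sdiff.mpr ⟨hS' hvS', hvR⟩)
    exact ⟨w, mem_inter.mpr ⟨hw, hFE' _ hw hvS'⟩,
      fun w' hw' => hw_unique w' (mem_inter.mp hw').1⟩
  exists_root v hv := by
    obtain ⟨hvS', hvR⟩ := mem_sdiff.mp hv
    obtain ⟨u, hu, hvu⟩ := hF.exists_root v (mem_sdiff.mpr ⟨hS' hvS', hvR⟩)
    refine ⟨u, hu, hvu.mono_of_mem (s := (S' : Set (Fin n))) hvS' fun a b hab ha => ?_⟩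
    have habE' := hFE' _ hab ha
    exact ⟨mem_inter.mpr ⟨hab, habE'⟩, (hE' _ habE').2⟩

lemma union (hF' : IsHangingForest E' R S' F') (hF : IsHangingForest E S' S F)
    (hE : E' ⊆ E) (hR : R ⊆ S') (hS : S' ⊆ S) : IsHangingForest E R S (F' ∪ F) where
  subset := union_subset (hF'.subset.trans hE) hF.subset
  fst_mem e he := by
    rcases mem_union.mp he with he | he
    · exact sdiff_subset_sdiff hS le_rfl (hF'.fst_mem e he)
    · exact sdiff_subset_sdiff le_rfl hR (hF.fst_mem e he)
  existsUnique_out v hv := by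
    obtain ⟨hvS, hvR⟩ := mem_sdiff.mp hv
    by_cases hvS' : v ∈ S'
    · obtain ⟨w, hw, hw_unique⟩ := hF'.existsUnique_out v (mem_sdiff.mpr ⟨hvS', hvR⟩)
      refine ⟨w, mem_union_left _ hw, fun w' hw' => ?_⟩
      rcases mem_union.mp hw' with h | h
      · exact hw_unique w' h
      · exact absurd hvS' (mem_sdiff.mp (hF.fst_mem _ h)).2
    · obtain ⟨w, hw, hw_unique⟩ := hF.existsUnique_out v (mem_sdiff.mpr ⟨hvS, hvS'⟩)
      refine ⟨w, mem_union_right _ hw, fun w' hw' => ?_⟩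
      rcases mem_union.mp hw' with h | h
      · exact absurd (mem_sdiff.mp (hF'.fst_mem _ h)).1 hvS'
      · exact hw_unique w' h
  exists_root v hv := by
    obtain ⟨hvS, hvR⟩ := mem_sdiff.mp hv
    by_cases hvS' : v ∈ S'
    · obtain ⟨u, hu, hvu⟩ := hF'.exists_root v (mem_sdiff.mpr ⟨hvS', hvR⟩)
      exact ⟨u, hu, reflTransGen_mem_mono subset_union_left hvu⟩
    · obtain ⟨w, hw, hvw⟩ := hF.exists_root v (mem_sdiff.mpr ⟨hvS, hvS'⟩)
      by_cases hwR : w ∈ R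
      · exact ⟨w, hwR, reflTransGen_mem_mono subset_union_right hvw⟩
      · obtain ⟨u, hu, hwu⟩ := hF'.exists_root w (mem_sdiff.mpr ⟨hw, hwR⟩)
        exact ⟨u, hu, (reflTransGen_mem_mono subset_union_right hvw).trans
          (reflTransGen_mem_mono subset_union_left hwu)⟩

lemma disjoint (hF : IsHangingForest E R S F) (hE' : ∀ e ∈ E', e.1 ∈ R) : Disjoint F E' :=
  disjoint_left.mpr fun e he he' => (mem_sdiff.mp (hF.fst_mem e he)).2 (hE' e he')

lemma card_eq (hF : IsHangingForest E R S F) : F.card = (S \ R).card := by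
  refine card_bij (fun e _ => e.1) hF.fst_mem (fun e he e' he' h => ?_) fun v hv => ?_
  · obtain ⟨w, -, hw_unique⟩ := hF.existsUnique_out e.1 (hF.fst_mem e he)
    have he'' : (e.1, e'.2) ∈ F := h ▸ he'
    exact Prod.ext h ((hw_unique _ he).trans (hw_unique _ he'').symm)
  · obtain ⟨w, hw, -⟩ := hF.existsUnique_out v hv
    exact ⟨(v, w), hw, rfl⟩

end IsHangingForest

lemma union_inter_and_sdiff_eq {α : Type*} [DecidableEq α] {s t u : Finset α} (hs : s ⊆ u)
    (ht : Disjoint t u) : ((s ∪ t) ∩ u, (s ∪ t) \ u) = (s, t) := by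
  rw [union_inter_distrib_right, inter_eq_left.mpr hs,
    disjoint_iff_inter_eq_empty.mp ht, union_empty, union_sdiff_distrib,
    sdiff_eq_empty_iff_subset.mpr hs, sdiff_eq_self_of_disjoint ht,
    empty_union]

noncomputable def hangingForests (E : Finset (Fin n × Fin n)) (R S : Finset (Fin n)) :
    Finset (Finset (Fin n × Fin n)) :=
  E.powerset.filter (IsHangingForest E R S)

lemma mem_hangingForests {E F : Finset (Fin n × Fin n)} {R S : Finset (Fin n)} :
    F ∈ hangingForests E R S ↔ IsHangingForest E R S F := by
  rw [hangingForests, mem_filter, mem_powerset]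
  exact and_iff_right_of_imp IsHangingForest.subset

namespace Digraph

open Filter Topology

variable {G G' : Digraph n} {i j : Fin n} {T : Finset (Fin n × Fin n)}

lemma isSpanTree_iff : G.IsSpanTree i T ↔ IsHangingForest G.edges {i} G.verts T := by
  constructor
  · rintro ⟨hTE, hout, hi, hreach⟩
    refine ⟨hTE, fun e he => ?_, fun v hv => ?_, fun v hv => ?_⟩
    · refine mem_sdiff.mpr ⟨(G.mem_verts e (hTE he)).1, fun h => hi e.2 ?_⟩
      rwa [← mem_singleton.mp h]
    · obtain ⟨hvG, hvi⟩ := mem_sdiff.mp hv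
      exact hout v hvG (notMem_singleton.mp hvi)
    · exact ⟨i, mem_singleton_self i, hreach v (mem_sdiff.mp hv).1⟩
  · intro hT
    refine ⟨hT.subset, fun v hv hvi => ?_, fun k hk => ?_, fun v hv => ?_⟩
    · exact hT.existsUnique_out v (mem_sdiff.mpr ⟨hv, notMem_singleton.mpr hvi⟩)
    · exact (mem_sdiff.mp (hT.fst_mem _ hk)).2 (mem_singleton_self i)
    · by_cases hvi : v = i
      · exact hvi ▸ .refl
      · obtain ⟨u, hu, hvu⟩ :=
          hT.exists_root v (mem_sdiff.mpr ⟨hv, notMem_singleton.mpr hvi⟩)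
        rwa [← mem_singleton.mp hu]

lemma price_eq_sum (b : Fin n × Fin n → ℝ) :
    G.price i b = ∑ T ∈ hangingForests G.edges {i} G.verts, ∏ e ∈ T, b e := by
  rw [price, hangingForests]
  congr 1
  exact filter_congr fun _ _ => isSpanTree_iff

lemma exists_isHangingForest (hc : G.Connected) (hi : i ∈ G.verts) :
    ∃ T, IsHangingForest G.edges {i} G.verts T :=
  IsHangingForest.empty.exists_of_forall_reach subset_rfl (singleton_subset_iff.mpr hi)
    (fun e he => (G.mem_verts e he).1) fun v hv => ⟨i, mem_singleton_self i, hc.2 v hv i hi⟩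

lemma price_pos (hc : G.Connected) (hi : i ∈ G.verts) {b : Fin n × Fin n → ℝ}
    (hb : ∀ e ∈ G.edges, 0 < b e) : 0 < G.price i b := by
  rw [price_eq_sum]
  obtain ⟨T, hT⟩ := exists_isHangingForest hc hi
  exact sum_pos (fun T hT => prod_pos fun e he =>
      hb e ((mem_hangingForests.mp hT).subset he)) ⟨T, mem_hangingForests.mpr hT⟩

lemma filter_fst_notMem_subset_sdiff (T : Finset (Fin n × Fin n)) :
    T.filter (fun e => e.1 ∉ G'.verts) ⊆ T \ G'.edges := fun e he =>
  mem_sdiff.mpr ⟨(mem_filter.mp he).1,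
    fun h => (mem_filter.mp he).2 (G'.mem_verts e h).1⟩

lemma card_sdiff_verts_le (hi : i ∈ G'.verts) (hT : IsHangingForest G.edges {i} G.verts T) :
    (G.verts \ G'.verts).card ≤ (T \ G'.edges).card := by
  rw [← (hT.filter_fst_notMem (singleton_subset_iff.mpr hi)).card_eq]
  exact card_le_card (filter_fst_notMem_subset_sdiff T)

lemma isHangingForest_inter_and_sdiff (hsub : G'.IsSubgraph G) (hi : i ∈ G'.verts)
    (hT : IsHangingForest G.edges {i} G.verts T)
    (hcard : (T \ G'.edges).card = (G.verts \ G'.verts).card) :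
    IsHangingForest G'.edges {i} G'.verts (T ∩ G'.edges) ∧
      IsHangingForest G.edges G'.verts G.verts (T \ G'.edges) := by
  have hforest := hT.filter_fst_notMem (singleton_subset_iff.mpr hi)
  -- the `m` edges leaving `V(G) \ V(G')` already account for every edge of `T` outside `G'`
  have hsdiff : T \ G'.edges = T.filter fun e => e.1 ∉ G'.verts :=
    (eq_of_subset_of_card_le (filter_fst_notMem_subset_sdiff T)
      (by rw [hcard, hforest.card_eq])).symm
  refine ⟨hT.inter hsub.1 G'.mem_verts fun e he he1 => ?_, hsdiff ▸ hforest⟩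
  by_contra heE'
  have he' : e ∈ T \ G'.edges := mem_sdiff.mpr ⟨he, heE'⟩
  rw [hsdiff] at he'
  exact (mem_filter.mp he').2 he1

lemma sum_prod_inter_of_card_sdiff_eq (hsub : G'.IsSubgraph G) (hi : i ∈ G'.verts)
    (b : Fin n × Fin n → ℝ) :
    ∑ T ∈ (hangingForests G.edges {i} G.verts).filter
        (fun T => (T \ G'.edges).card = (G.verts \ G'.verts).card), ∏ e ∈ T ∩ G'.edges, b e
      = (hangingForests G.edges G'.verts G.verts).card * G'.price i b := by
  have hglue : ∀ p ∈ hangingForests G'.edges {i} G'.verts ×ˢ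
        hangingForests G.edges G'.verts G.verts,
      IsHangingForest G.edges {i} G.verts (p.1 ∪ p.2) ∧
        ((p.1 ∪ p.2) ∩ G'.edges, (p.1 ∪ p.2) \ G'.edges) = p := fun p hp => by
    obtain ⟨hT', hF⟩ := mem_product.mp hp
    rw [mem_hangingForests] at hT' hF
    exact ⟨hT'.union hF hsub.2 (singleton_subset_iff.mpr hi) hsub.1,
      union_inter_and_sdiff_eq hT'.subset (hF.disjoint fun e he => (G'.mem_verts e he).1)⟩
  simp_rw [price_eq_sum, mul_sum, ← nsmul_eq_mul, ← sum_const]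
  rw [← sum_product (f := fun p => ∏ e ∈ p.1, b e)]
  refine sum_bij' (fun T _ => (T ∩ G'.edges, T \ G'.edges)) (fun p _ => p.1 ∪ p.2)
    (fun T hT => ?_) (fun p hp => ?_) (fun T _ => sup_inf_sdiff T G'.edges)
    (fun p hp => (hglue p hp).2) fun _ _ => rfl
  · obtain ⟨hT, hcard⟩ := mem_filter.mp hT
    obtain ⟨hT', hF⟩ := isHangingForest_inter_and_sdiff hsub hi (mem_hangingForests.mp hT) hcard
    exact mem_product.mpr ⟨mem_hangingForests.mpr hT', mem_hangingForests.mpr hF⟩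
  · obtain ⟨hglued, hsplit⟩ := hglue p hp
    refine mem_filter.mpr ⟨mem_hangingForests.mpr hglued, ?_⟩
    rw [show (p.1 ∪ p.2) \ G'.edges = p.2 from congrArg Prod.snd hsplit,
      (mem_hangingForests.mp (mem_product.mp hp).2).card_eq]

/-- `G.price i` at weights `b` on the edges of `G'` and `ε` elsewhere, divided by
`ε ^ |V(G) \ V(G')|`; the truncated subtraction is harmless by `card_sdiff_verts_le`. -/
noncomputable def scaledPrice (G G' : Digraph n) (i : Fin n) (b : Fin n × Fin n → ℝ)
    (ε : ℝ) : ℝ :=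
  ∑ T ∈ hangingForests G.edges {i} G.verts,
    (∏ e ∈ T ∩ G'.edges, b e) * ε ^ ((T \ G'.edges).card - (G.verts \ G'.verts).card)

lemma price_piecewise (hi : i ∈ G'.verts) (b : Fin n × Fin n → ℝ) (ε : ℝ) :
    G.price i (G'.edges.piecewise b fun _ => ε) =
      ε ^ (G.verts \ G'.verts).card * G.scaledPrice G' i b ε := by
  rw [price_eq_sum, scaledPrice, mul_sum]
  refine sum_congr rfl fun T hT => ?_
  obtain ⟨k, hk⟩ := Nat.exists_eq_add_of_le (card_sdiff_verts_le hi (mem_hangingForests.mp hT))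
  have hin : ∏ e ∈ T ∩ G'.edges, G'.edges.piecewise b (fun _ => ε) e =
      ∏ e ∈ T ∩ G'.edges, b e :=
    prod_congr rfl fun e he => piecewise_eq_of_mem _ _ _ (mem_inter.mp he).2
  have hout : ∏ e ∈ T \ G'.edges, G'.edges.piecewise b (fun _ => ε) e =
      ε ^ (T \ G'.edges).card :=
    prod_eq_pow_card fun e he => piecewise_eq_of_notMem _ _ _ (mem_sdiff.mp he).2
  rw [← prod_inter_mul_prod_sdiff T G'.edges, hin, hout, hk, Nat.add_sub_cancel_left, pow_add]
  ring

lemma continuous_scaledPrice (G G' : Digraph n) (i : Fin n) (b : Fin n × Fin n → ℝ) :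
    Continuous (G.scaledPrice G' i b) := by
  unfold scaledPrice
  fun_prop

lemma scaledPrice_zero (hsub : G'.IsSubgraph G) (hi : i ∈ G'.verts) (b : Fin n × Fin n → ℝ) :
    G.scaledPrice G' i b 0 = (hangingForests G.edges G'.verts G.verts).card * G'.price i b := by
  rw [scaledPrice, ← sum_prod_inter_of_card_sdiff_eq hsub hi b, sum_filter]
  refine sum_congr rfl fun T hT => ?_
  have hle := card_sdiff_verts_le hi (mem_hangingForests.mp hT)
  split_ifs with hcard
  · rw [hcard, Nat.sub_self, pow_zero, mul_one]
  · rw [zero_pow (by omega), mul_zero]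

lemma card_hangingForests_pos (hc : G.Connected) (hsub : G'.IsSubgraph G)
    (hi : i ∈ G'.verts) : 0 < (hangingForests G.edges G'.verts G.verts).card := by
  obtain ⟨T, hT⟩ := exists_isHangingForest hc (hsub.1 hi)
  exact card_pos.mpr
    ⟨_, mem_hangingForests.mpr (hT.filter_fst_notMem (singleton_subset_iff.mpr hi))⟩

lemma tendsto_priceRatio_piecewise (hc : G.Connected) (hc' : G'.Connected)
    (hsub : G'.IsSubgraph G) (hi : i ∈ G'.verts) (hj : j ∈ G'.verts)
    {b : Fin n × Fin n → ℝ} (hb : ∀ e ∈ G'.edges, 0 < b e) :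
    Tendsto (fun ε => G.priceRatio i j (G'.edges.piecewise b fun _ => ε)) (𝓝[>] 0)
      (𝓝 (G'.priceRatio i j b)) := by
  have hN : (0 : ℝ) < (hangingForests G.edges G'.verts G.verts).card := by
    exact_mod_cast card_hangingForests_pos hc hsub hi
  have hlim : Tendsto (fun ε => G.scaledPrice G' i b ε / G.scaledPrice G' j b ε) (𝓝 0)
      (𝓝 (G'.priceRatio i j b)) := by
    have hj0 : G.scaledPrice G' j b 0 ≠ 0 := by
      rw [scaledPrice_zero hsub hj]
      exact (mul_pos hN (price_pos hc' hj hb)).ne'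
    have := ((continuous_scaledPrice G G' i b).tendsto 0).div
      ((continuous_scaledPrice G G' j b).tendsto 0) hj0
    rwa [scaledPrice_zero hsub hi, scaledPrice_zero hsub hj, mul_div_mul_left _ _ hN.ne'] at this
  refine (hlim.mono_left nhdsWithin_le_nhds).congr' ?_
  filter_upwards [self_mem_nhdsWithin] with ε hε
  rw [priceRatio, price_piecewise hi, price_piecewise hj,
    mul_div_mul_left _ _ (pow_ne_zero _ (ne_of_gt hε))]

lemma Influential.of_isSubgraph (hc : G.Connected) (hc' : G'.Connected)
    (hsub : G'.IsSubgraph G) (hi : i ∈ G'.verts) (hj : j ∈ G'.verts) {e : Fin n × Fin n}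
    (h : G'.Influential (G'.priceRatio i j) e) : G.Influential (G.priceRatio i j) e := by
  obtain ⟨b, b', hb, hb', hbb', hne⟩ := h
  by_contra hG
  have hpos : ∀ {c : Fin n × Fin n → ℝ}, (∀ e ∈ G'.edges, 0 < c e) → ∀ ε > 0,
      ∀ e' ∈ G.edges, 0 < G'.edges.piecewise c (fun _ => ε) e' := by
    intro c hcpos ε hε e' _
    by_cases he' : e' ∈ G'.edges
    · rw [piecewise_eq_of_mem _ _ _ he']
      exact hcpos e' he'
    · rwa [piecewise_eq_of_notMem _ _ _ he']
  have heq : ∀ ε > 0, G.priceRatio i j (G'.edges.piecewise b fun _ => ε) =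
      G.priceRatio i j (G'.edges.piecewise b' fun _ => ε) := fun ε hε => by
    by_contra hne'
    refine hG ⟨_, _, hpos hb ε hε, hpos hb' ε hε, fun e' he' => ?_, hne'⟩
    simp only [piecewise, hbb' e' he']
  refine hne (tendsto_nhds_unique (tendsto_priceRatio_piecewise hc hc' hsub hi hj hb) ?_)
  refine (tendsto_priceRatio_piecewise hc hc' hsub hi hj hb').congr' ?_
  filter_upwards [self_mem_nhdsWithin] with ε hε using (heq ε hε).symm

lemma priceCplxPair_le_of_isSubgraph (hc : G.Connected) (hc' : G'.Connected)
    (hsub : G'.IsSubgraph G) (hi : i ∈ G'.verts) (hj : j ∈ G'.verts) :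
    G'.priceCplxPair i j ≤ G.priceCplxPair i j :=
  card_le_card fun _ he => mem_filter.mpr ⟨hsub.2 (mem_filter.mp he).1,
    (mem_filter.mp he).2.of_isSubgraph hc hc' hsub hi hj⟩

end Digraph

end Money

/-- a connected subgraph has no larger price complexity. -/
theorem stmt9 {n : ℕ} (G G' : Money.Digraph n) (hc : G.Connected)
    (hc' : G'.Connected) (hsub : G'.IsSubgraph G) :
    G'.priceComplexity ≤ G.priceComplexity := by
  refine Finset.sup_le fun p hp => ?_
  obtain ⟨hp, hne⟩ := Finset.mem_filter.mp hp
  obtain ⟨hi, hj⟩ := Finset.mem_product.mp hp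
  refine (priceCplxPair_le_of_isSubgraph hc hc' hsub hi hj).trans ?_
  unfold priceComplexity
  apply Finset.le_sup (b := p)
  exact Finset.mem_filter.mpr ⟨Finset.mem_product.mpr ⟨hsub.1 hi, hsub.1 hj⟩, hne⟩
end

section
/- Let ij be a collapsible edge of a connected directed graph G and let G′ be the ij-collapse of G. Then for every vertex k of G′, p_k(G) = b_ij · p_k(G′) (every spanning k-tree of G contains the edge ij, and collapsing it is a bijection with spanning k-trees of G′), and consequently π(G) ≥ π(G′). -/
open scoped Classical

open Money Money.Digraph

namespace Stmt10Aux

open Money Money.Digraph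

variable {n : ℕ}

/-- The collapse map on edges. -/
def phi (i j : Fin n) (e : Fin n × Fin n) : Fin n × Fin n :=
  if e.2 = i then (e.1, j) else e

/-- The inverse collapse map on edges. -/
noncomputable def psi (G : Money.Digraph n) (i j : Fin n) (e : Fin n × Fin n) :
    Fin n × Fin n :=
  if e.2 = j ∧ (e.1, i) ∈ G.edges then (e.1, i) else e

lemma phi_fst (i j : Fin n) (e : Fin n × Fin n) : (phi i j e).1 = e.1 := by
  unfold phi; split <;> rfl

lemma psi_fst (G : Money.Digraph n) (i j : Fin n) (e : Fin n × Fin n) :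
    (psi G i j e).1 = e.1 := by
  unfold psi; split <;> rfl

section

variable {G G' : Money.Digraph n} {i j : Fin n}

lemma succ_eq (hcol : G.Collapsible i j) :
    ∀ e ∈ G.edges, e.1 = i → e = (i, j) := by
  intro e heE hfst
  have h1 : e ∈ G.edges.filter (fun e => e.1 = i) := Finset.mem_filter.mpr ⟨heE, hfst⟩
  have h2 : (i, j) ∈ G.edges.filter (fun e => e.1 = i) :=
    Finset.mem_filter.mpr ⟨hcol.1, rfl⟩
  have hout : (G.edges.filter (fun e => e.1 = i)).card = 1 := hcol.2.1
  exact Finset.card_le_one.mp (le_of_eq hout) _ h1 _ h2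

lemma psi_phi (hcol : G.Collapsible i j) {e : Fin n × Fin n}
    (heE : e ∈ G.edges) (hne : e ≠ (i, j)) : psi G i j (phi i j e) = e := by
  by_cases h2 : e.2 = i
  · have he' : e = (e.1, i) := by rw [← h2]
    have : phi i j e = (e.1, j) := by unfold phi; rw [if_pos h2]
    rw [this]
    unfold psi
    rw [if_pos ⟨rfl, he' ▸ heE⟩]
    exact he'.symm
  · have hphi : phi i j e = e := by unfold phi; rw [if_neg h2]
    rw [hphi]
    unfold psi
    rw [if_neg]
    rintro ⟨hj, hi⟩
    exact hcol.2.2.2 e.1 ⟨hi, by rwa [← hj]⟩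

lemma mem_edges' (he : G'.edges = (G.edges.erase (i, j)).image (phi i j))
    {f : Fin n × Fin n} :
    f ∈ G'.edges ↔ ∃ e, e ∈ G.edges ∧ e ≠ (i, j) ∧ phi i j e = f := by
  rw [he]
  simp only [Finset.mem_image, Finset.mem_erase]
  constructor
  · rintro ⟨e, ⟨h1, h2⟩, h3⟩; exact ⟨e, h2, h1, h3⟩
  · rintro ⟨e, h1, h2, h3⟩; exact ⟨e, ⟨h2, h1⟩, h3⟩

lemma snd_ne_i (hcol : G.Collapsible i j)
    (he : G'.edges = (G.edges.erase (i, j)).image (phi i j))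
    {f : Fin n × Fin n} (hf : f ∈ G'.edges) : f.2 ≠ i := by
  obtain ⟨e, -, -, hphi⟩ := (mem_edges' he).mp hf
  have hij : i ≠ j := G.no_loops _ hcol.1
  subst hphi
  unfold phi
  split
  · exact fun h => hij h.symm
  · assumption

lemma ij_notMem' (hcol : G.Collapsible i j)
    (he : G'.edges = (G.edges.erase (i, j)).image (phi i j)) :
    (i, j) ∉ G'.edges := by
  intro hmem
  obtain ⟨e, heE, hne, hphi⟩ := (mem_edges' he).mp hmem
  by_cases h2 : e.2 = i
  · have : phi i j e = (e.1, j) := by unfold phi; rw [if_pos h2]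
    rw [this] at hphi
    have h1 : e.1 = i := congrArg Prod.fst hphi
    have := succ_eq hcol e heE h1
    rw [this] at h2
    exact G.no_loops _ hcol.1 h2.symm
  · have : phi i j e = e := by unfold phi; rw [if_neg h2]
    rw [this] at hphi
    exact hne hphi

lemma psi_mem (hcol : G.Collapsible i j)
    (he : G'.edges = (G.edges.erase (i, j)).image (phi i j))
    {f : Fin n × Fin n} (hf : f ∈ G'.edges) :
    psi G i j f ∈ G.edges ∧ psi G i j f ≠ (i, j) ∧ phi i j (psi G i j f) = f := by
  obtain ⟨e, heE, hne, hphi⟩ := (mem_edges' he).mp hf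
  have key : psi G i j f = e := by rw [← hphi]; exact psi_phi hcol heE hne
  rw [key, hphi]
  exact ⟨heE, hne, rfl⟩

lemma phi_pair (i j : Fin n) (v w : Fin n) :
    phi i j (v, w) = (v, if w = i then j else w) := by
  unfold phi; by_cases h : w = i <;> simp [h]

lemma psi_pair (G : Money.Digraph n) (i j : Fin n) (v w : Fin n) :
    psi G i j (v, w) = (v, if w = j ∧ (v, i) ∈ G.edges then i else w) := by
  unfold psi; by_cases h : w = j ∧ (v, i) ∈ G.edges <;> simp [h]

lemma ij_mem_tree (hcol : G.Collapsible i j) {k : Fin n} (hki : k ≠ i)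
    {T : Finset (Fin n × Fin n)} (hT : G.IsSpanTree k T) : (i, j) ∈ T := by
  obtain ⟨hTE, huniq, -, -⟩ := hT
  have hiv : i ∈ G.verts := (G.mem_verts _ hcol.1).1
  obtain ⟨w, hw, -⟩ := huniq i hiv (fun h => hki h.symm)
  have := succ_eq hcol (i, w) (hTE hw) rfl
  rwa [← this]

lemma forward (hcol : G.Collapsible i j)
    (hv : G'.verts = G.verts.erase i)
    (he : G'.edges = (G.edges.erase (i, j)).image (phi i j))
    {k : Fin n} (hk : k ∈ G'.verts) {T : Finset (Fin n × Fin n)}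
    (hT : G.IsSpanTree k T) :
    G'.IsSpanTree k ((T.erase (i, j)).image (phi i j)) := by
  obtain ⟨hki, hkv⟩ := Finset.mem_erase.mp (hv ▸ hk)
  obtain ⟨hTE, huniq, hkno, hreach⟩ := hT
  set S := (T.erase (i, j)).image (phi i j) with hS
  have hmemS : ∀ f, f ∈ S ↔ ∃ e, e ∈ T ∧ e ≠ (i, j) ∧ phi i j e = f := by
    intro f
    simp only [hS, Finset.mem_image, Finset.mem_erase]
    constructor
    · rintro ⟨e, ⟨h1, h2⟩, h3⟩; exact ⟨e, h2, h1, h3⟩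
    · rintro ⟨e, h1, h2, h3⟩; exact ⟨e, ⟨h2, h1⟩, h3⟩
  refine ⟨?_, ?_, ?_, ?_⟩
  · intro f hf
    obtain ⟨e, h1, h2, h3⟩ := (hmemS f).mp hf
    exact (mem_edges' he).mpr ⟨e, hTE h1, h2, h3⟩
  · intro v hvv hvk
    obtain ⟨hvi, hvG⟩ := Finset.mem_erase.mp (hv ▸ hvv)
    obtain ⟨w, hw, hwu⟩ := huniq v hvG hvk
    refine ⟨if w = i then j else w, ?_, ?_⟩
    · refine (hmemS _).mpr ⟨(v, w), hw, by simp [Prod.ext_iff, hvi], ?_⟩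
      exact phi_pair i j v w
    · intro u hu
      obtain ⟨⟨a, c⟩, h1, h2, h3⟩ := (hmemS _).mp hu
      rw [phi_pair, Prod.ext_iff] at h3
      obtain ⟨ha, hc⟩ := h3
      subst ha
      have : c = w := hwu c h1
      subst this
      exact hc.symm
  · intro w hw
    obtain ⟨⟨a, c⟩, h1, h2, h3⟩ := (hmemS _).mp hw
    rw [phi_pair, Prod.ext_iff] at h3
    obtain ⟨ha, -⟩ := h3
    subst ha
    exact hkno c h1
  · have claim : ∀ v, Relation.ReflTransGen (fun a b => (a, b) ∈ T) v k →
        Relation.ReflTransGen (fun a b => (a, b) ∈ S) (if v = i then j else v) k := by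
      intro v hvk
      induction hvk using Relation.ReflTransGen.head_induction_on with
      | refl => rw [if_neg hki]
      | head hstep _ ih =>
        rename_i a c _
        by_cases hai : a = i
        · subst hai
          have hcj : c = j := by
            have := succ_eq hcol (a, c) (hTE hstep) rfl
            exact congrArg Prod.snd this
          rw [if_pos rfl]
          rw [hcj, if_neg (fun h => G.no_loops _ hcol.1 h.symm)] at ih
          exact ih
        · rw [if_neg hai]
          have hne : (a, c) ≠ (i, j) := by simp [Prod.ext_iff, hai]
          have hmem : (a, if c = i then j else c) ∈ S :=
            (hmemS _).mpr ⟨(a, c), hstep, hne, phi_pair i j a c⟩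
          exact Relation.ReflTransGen.head hmem ih
    intro v hvv
    obtain ⟨hvi, hvG⟩ := Finset.mem_erase.mp (hv ▸ hvv)
    have := claim v (hreach v hvG)
    rwa [if_neg hvi] at this

lemma backward (hcol : G.Collapsible i j)
    (hv : G'.verts = G.verts.erase i)
    (he : G'.edges = (G.edges.erase (i, j)).image (phi i j))
    {k : Fin n} (hk : k ∈ G'.verts) {T' : Finset (Fin n × Fin n)}
    (hT' : G'.IsSpanTree k T') :
    G.IsSpanTree k (insert (i, j) (T'.image (psi G i j))) := by
  obtain ⟨hki, hkv⟩ := Finset.mem_erase.mp (hv ▸ hk)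
  obtain ⟨hTE, huniq, hkno, hreach⟩ := hT'
  have hij : i ≠ j := G.no_loops _ hcol.1
  have hjv' : j ∈ G'.verts := by
    rw [hv]
    exact Finset.mem_erase.mpr ⟨fun h => hij h.symm, (G.mem_verts _ hcol.1).2⟩
  set S := insert (i, j) (T'.image (psi G i j)) with hS
  have hfst : ∀ e ∈ T', e.1 ≠ i := by
    intro e heT
    have := (G'.mem_verts e (hTE heT)).1
    rw [hv] at this
    exact (Finset.mem_erase.mp this).1
  have hmemS : ∀ f, f ∈ S ↔ f = (i, j) ∨ ∃ e ∈ T', psi G i j e = f := by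
    intro f
    simp only [hS, Finset.mem_insert, Finset.mem_image]
  refine ⟨?_, ?_, ?_, ?_⟩
  · intro f hf
    rcases (hmemS f).mp hf with h | ⟨e, heT, hpsi⟩
    · rw [h]; exact hcol.1
    · rw [← hpsi]; exact (psi_mem hcol he (hTE heT)).1
  · intro v hvG hvk
    by_cases hvi : v = i
    · subst hvi
      refine ⟨j, (hmemS _).mpr (Or.inl rfl), ?_⟩
      intro u hu
      rcases (hmemS _).mp hu with h | ⟨⟨a, c⟩, heT, hpsi⟩
      · exact (congrArg Prod.snd h)
      · rw [psi_pair, Prod.ext_iff] at hpsi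
        exact absurd hpsi.1 (hfst (a, c) heT)
    · have hvv' : v ∈ G'.verts := by rw [hv]; exact Finset.mem_erase.mpr ⟨hvi, hvG⟩
      obtain ⟨w, hw, hwu⟩ := huniq v hvv' hvk
      refine ⟨if w = j ∧ (v, i) ∈ G.edges then i else w, ?_, ?_⟩
      · exact (hmemS _).mpr (Or.inr ⟨(v, w), hw, psi_pair G i j v w⟩)
      · intro u hu
        rcases (hmemS _).mp hu with h | ⟨⟨a, c⟩, heT, hpsi⟩
        · exact absurd (congrArg Prod.fst h) hvi
        · rw [psi_pair, Prod.ext_iff] at hpsi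
          obtain ⟨ha, hc⟩ := hpsi
          subst ha
          have : c = w := hwu c heT
          subst this
          exact hc.symm
  · intro w hw
    rcases (hmemS _).mp hw with h | ⟨⟨a, c⟩, heT, hpsi⟩
    · exact hki (congrArg Prod.fst h)
    · rw [psi_pair, Prod.ext_iff] at hpsi
      obtain ⟨ha, -⟩ := hpsi
      subst ha
      exact hkno c heT
  · have claim : ∀ v, Relation.ReflTransGen (fun a b => (a, b) ∈ T') v k →
        Relation.ReflTransGen (fun a b => (a, b) ∈ S) v k := by
      intro v hvk
      induction hvk using Relation.ReflTransGen.head_induction_on with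
      | refl => exact Relation.ReflTransGen.refl
      | head hstep _ ih =>
        rename_i a c _
        by_cases hcond : c = j ∧ (a, i) ∈ G.edges
        · have hmem1 : (a, i) ∈ S := by
            refine (hmemS _).mpr (Or.inr ⟨(a, c), hstep, ?_⟩)
            rw [psi_pair, if_pos hcond]
          have hmem2 : (i, j) ∈ S := (hmemS _).mpr (Or.inl rfl)
          refine Relation.ReflTransGen.head hmem1 (Relation.ReflTransGen.head hmem2 ?_)
          rwa [← hcond.1]
        · have hmem : (a, c) ∈ S := by
            refine (hmemS _).mpr (Or.inr ⟨(a, c), hstep, ?_⟩)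
            rw [psi_pair, if_neg hcond]
          exact Relation.ReflTransGen.head hmem ih
    intro v hvG
    by_cases hvi : v = i
    · subst hvi
      exact Relation.ReflTransGen.head ((hmemS _).mpr (Or.inl rfl))
        (claim j (hreach j hjv'))
    · exact claim v (hreach v (by rw [hv]; exact Finset.mem_erase.mpr ⟨hvi, hvG⟩))

lemma left_inv (hcol : G.Collapsible i j) {T : Finset (Fin n × Fin n)}
    (hTE : T ⊆ G.edges) (hijT : (i, j) ∈ T) :
    insert (i, j) (((T.erase (i, j)).image (phi i j)).image (psi G i j)) = T := by
  rw [Finset.image_image]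
  have : (T.erase (i, j)).image (psi G i j ∘ phi i j) = T.erase (i, j) := by
    rw [Finset.image_congr (g := id), Finset.image_id]
    intro e heq
    obtain ⟨hne, heT⟩ := Finset.mem_erase.mp heq
    exact psi_phi hcol (hTE heT) hne
  rw [this, Finset.insert_erase hijT]

lemma right_inv (hcol : G.Collapsible i j)
    (he : G'.edges = (G.edges.erase (i, j)).image (phi i j))
    {T' : Finset (Fin n × Fin n)} (hTE : T' ⊆ G'.edges) :
    ((insert (i, j) (T'.image (psi G i j))).erase (i, j)).image (phi i j) = T' := by
  have hnot : (i, j) ∉ T'.image (psi G i j) := by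
    intro hmem
    obtain ⟨e, heT, hpsi⟩ := Finset.mem_image.mp hmem
    exact (psi_mem hcol he (hTE heT)).2.1 hpsi
  rw [Finset.erase_insert hnot, Finset.image_image]
  rw [Finset.image_congr (g := id), Finset.image_id]
  intro e heq
  exact (psi_mem hcol he (hTE heq)).2.2

lemma bprime_phi (hcol : G.Collapsible i j) (b : Fin n × Fin n → ℝ)
    {e : Fin n × Fin n} (heE : e ∈ G.edges) (hne : e ≠ (i, j)) :
    (if (phi i j e).2 = j ∧ ((phi i j e).1, i) ∈ G.edges then b ((phi i j e).1, i)
      else b (phi i j e)) = b e := by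
  by_cases h2 : e.2 = i
  · have he' : e = (e.1, i) := by rw [← h2]
    have hphi : phi i j e = (e.1, j) := by unfold phi; rw [if_pos h2]
    have hmem : (e.1, i) ∈ G.edges := by rw [← he']; exact heE
    rw [hphi]
    rw [if_pos (show ((e.1, j) : Fin n × Fin n).2 = j ∧
      (((e.1, j) : Fin n × Fin n).1, i) ∈ G.edges from ⟨rfl, hmem⟩)]
    exact congrArg b he'.symm
  · have hphi : phi i j e = e := by unfold phi; rw [if_neg h2]
    rw [hphi, if_neg]
    rintro ⟨hj, hi⟩
    exact hcol.2.2.2 e.1 ⟨hi, by rwa [← hj]⟩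

lemma prod_phi (hcol : G.Collapsible i j) (b : Fin n × Fin n → ℝ)
    {T : Finset (Fin n × Fin n)} (hTE : T ⊆ G.edges) (hijT : (i, j) ∈ T) :
    (∏ e ∈ (T.erase (i, j)).image (phi i j),
      if e.2 = j ∧ (e.1, i) ∈ G.edges then b (e.1, i) else b e)
      = ∏ e ∈ T.erase (i, j), b e := by
  rw [Finset.prod_image]
  · refine Finset.prod_congr rfl ?_
    intro e heq
    obtain ⟨hne, heT⟩ := Finset.mem_erase.mp heq
    exact bprime_phi hcol b (hTE heT) hne
  · intro x hx y hy hxy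
    obtain ⟨hxne, hxT⟩ := Finset.mem_erase.mp hx
    obtain ⟨hyne, hyT⟩ := Finset.mem_erase.mp hy
    have := congrArg (psi G i j) hxy
    rwa [psi_phi hcol (hTE hxT) hxne, psi_phi hcol (hTE hyT) hyne] at this

lemma price_factor (hcol : G.Collapsible i j)
    (hv : G'.verts = G.verts.erase i)
    (he : G'.edges = (G.edges.erase (i, j)).image (phi i j))
    {k : Fin n} (hk : k ∈ G'.verts) (b : Fin n × Fin n → ℝ) :
    G.price k b = b (i, j) * G'.price k
      (fun e => if e.2 = j ∧ (e.1, i) ∈ G.edges then b (e.1, i) else b e) := by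
  have hki : k ≠ i := (Finset.mem_erase.mp (hv ▸ hk)).1
  unfold Money.Digraph.price
  rw [Finset.mul_sum]
  refine Finset.sum_nbij' (fun T => (T.erase (i, j)).image (phi i j))
    (fun T' => insert (i, j) (T'.image (psi G i j))) ?_ ?_ ?_ ?_ ?_
  · intro T hT
    obtain ⟨hTp, hTtree⟩ := Finset.mem_filter.mp hT
    have hTsub : T ⊆ G.edges := Finset.mem_powerset.mp hTp
    have := forward hcol hv he hk hTtree
    exact Finset.mem_filter.mpr ⟨Finset.mem_powerset.mpr this.1, this⟩
  · intro T' hT'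
    obtain ⟨hTp, hTtree⟩ := Finset.mem_filter.mp hT'
    have := backward hcol hv he hk hTtree
    exact Finset.mem_filter.mpr ⟨Finset.mem_powerset.mpr this.1, this⟩
  · intro T hT
    obtain ⟨hTp, hTtree⟩ := Finset.mem_filter.mp hT
    have hTsub : T ⊆ G.edges := Finset.mem_powerset.mp hTp
    exact left_inv hcol hTsub (ij_mem_tree hcol hki hTtree)
  · intro T' hT'
    obtain ⟨hTp, hTtree⟩ := Finset.mem_filter.mp hT'
    exact right_inv hcol he (Finset.mem_powerset.mp hTp)
  · intro T hT
    obtain ⟨hTp, hTtree⟩ := Finset.mem_filter.mp hT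
    have hTsub : T ⊆ G.edges := Finset.mem_powerset.mp hTp
    have hijT : (i, j) ∈ T := ij_mem_tree hcol hki hTtree
    rw [prod_phi hcol b hTsub hijT, Finset.mul_prod_erase _ _ hijT]

lemma price_congr (H : Money.Digraph n) (k : Fin n) {b c : Fin n × Fin n → ℝ}
    (h : ∀ e ∈ H.edges, b e = c e) : H.price k b = H.price k c := by
  unfold Money.Digraph.price
  refine Finset.sum_congr rfl ?_
  intro T hT
  have hTsub : T ⊆ H.edges :=
    Finset.mem_powerset.mp (Finset.mem_filter.mp hT).1
  exact Finset.prod_congr rfl fun e heT => h e (hTsub heT)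

lemma ind_apply {G : Money.Digraph n} {i j : Fin n} (c : Fin n × Fin n → ℝ)
    (g : Fin n × Fin n) :
    (if g.2 = j ∧ (g.1, i) ∈ G.edges then c (g.1, i) else c g) = c (psi G i j g) := by
  unfold psi; split <;> rfl

lemma influential_transfer (hcol : G.Collapsible i j)
    (hv : G'.verts = G.verts.erase i)
    (he : G'.edges = (G.edges.erase (i, j)).image (phi i j))
    {k l : Fin n} (hk : k ∈ G'.verts) (hl : l ∈ G'.verts)
    {f : Fin n × Fin n} (hf : f ∈ G'.edges)
    (hinf : G'.Influential (G'.priceRatio k l) f) :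
    G.Influential (G.priceRatio k l) (psi G i j f) := by
  obtain ⟨b, b2, hbpos, hb2pos, hagree, hne⟩ := hinf
  obtain ⟨hpsiE, hpsine, hphipsi⟩ := psi_mem hcol he hf
  classical
  set B : Fin n × Fin n → ℝ := fun e => if e = (i, j) then 1 else b (phi i j e) with hB
  set B2 : Fin n × Fin n → ℝ := Function.update B (psi G i j f) (b2 f) with hB2
  have hBij : B (i, j) = 1 := by rw [hB]; simp
  have hB2ij : B2 (i, j) = 1 := by
    rw [hB2, Function.update_of_ne (Ne.symm hpsine) _ _]
    exact hBij
  have hBval : ∀ e, e ≠ (i, j) → B e = b (phi i j e) := by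
    intro e hne'
    rw [hB]; simp only []; rw [if_neg hne']
  have hBpos : ∀ e ∈ G.edges, 0 < B e := by
    intro e heE
    by_cases h : e = (i, j)
    · rw [h, hBij]; norm_num
    · rw [hBval e h]
      exact hbpos _ ((mem_edges' he).mpr ⟨e, heE, h, rfl⟩)
  have hB2pos : ∀ e ∈ G.edges, 0 < B2 e := by
    intro e heE
    by_cases h : e = psi G i j f
    · rw [hB2, h, Function.update_self]
      exact hb2pos f hf
    · rw [hB2, Function.update_of_ne h _ _]
      exact hBpos e heE
  have hsame : ∀ e, e ≠ psi G i j f → B e = B2 e := by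
    intro e h
    rw [hB2, Function.update_of_ne h _ _]
  have hBpsi : ∀ g ∈ G'.edges, B (psi G i j g) = b g := by
    intro g hg
    obtain ⟨hgE, hgne, hphig⟩ := psi_mem hcol he hg
    rw [hBval _ hgne, hphig]
  have hindB : ∀ g ∈ G'.edges,
      (if g.2 = j ∧ (g.1, i) ∈ G.edges then B (g.1, i) else B g) = b g := by
    intro g hg
    rw [ind_apply]
    exact hBpsi g hg
  have hindB2 : ∀ g ∈ G'.edges,
      (if g.2 = j ∧ (g.1, i) ∈ G.edges then B2 (g.1, i) else B2 g) = b2 g := by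
    intro g hg
    rw [ind_apply]
    by_cases h : g = f
    · subst h
      rw [hB2, Function.update_self]
    · have hpsig : psi G i j g ≠ psi G i j f := by
        intro hEq
        apply h
        have := congrArg (phi i j) hEq
        rwa [(psi_mem hcol he hg).2.2, hphipsi] at this
      rw [hB2, Function.update_of_ne hpsig _ _, hBpsi g hg, hagree g h]
  have e1 : G.price k B = G'.price k b := by
    rw [price_factor hcol hv he hk B, hBij, one_mul]
    exact price_congr G' k (fun g hg => hindB g hg)
  have e2 : G.price l B = G'.price l b := by
    rw [price_factor hcol hv he hl B, hBij, one_mul]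
    exact price_congr G' l (fun g hg => hindB g hg)
  have e3 : G.price k B2 = G'.price k b2 := by
    rw [price_factor hcol hv he hk B2, hB2ij, one_mul]
    exact price_congr G' k (fun g hg => hindB2 g hg)
  have e4 : G.price l B2 = G'.price l b2 := by
    rw [price_factor hcol hv he hl B2, hB2ij, one_mul]
    exact price_congr G' l (fun g hg => hindB2 g hg)
  refine ⟨B, B2, hBpos, hB2pos, hsame, ?_⟩
  unfold Money.Digraph.priceRatio at hne ⊢
  rw [e1, e2, e3, e4]
  exact hne

lemma pair_le (hcol : G.Collapsible i j)
    (hv : G'.verts = G.verts.erase i)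
    (he : G'.edges = (G.edges.erase (i, j)).image (phi i j))
    {k l : Fin n} (hk : k ∈ G'.verts) (hl : l ∈ G'.verts) :
    G'.priceCplxPair k l ≤ G.priceCplxPair k l := by
  unfold Money.Digraph.priceCplxPair
  apply Finset.card_le_card_of_injOn (psi G i j)
  · intro f hfm
    obtain ⟨hfE, hfinf⟩ := Finset.mem_filter.mp hfm
    exact Finset.mem_filter.mpr ⟨(psi_mem hcol he hfE).1,
      influential_transfer hcol hv he hk hl hfE hfinf⟩
  · intro x hx y hy hxy
    have hxE := (Finset.mem_filter.mp hx).1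
    have hyE := (Finset.mem_filter.mp hy).1
    have := congrArg (phi i j) hxy
    rwa [(psi_mem hcol he hxE).2.2, (psi_mem hcol he hyE).2.2] at this

end

end Stmt10Aux

/-- collapsing a collapsible edge `ij`.  Every spanning `k`-tree
of `G` contains `ij`, prices factor as `p_k(G) = b_ij · p_k(G')` (for the
corresponding weights on `G'`), and `π(G) ≥ π(G')`. -/
theorem stmt10 {n : ℕ} (G G' : Money.Digraph n) (hc : G.Connected) (i j : Fin n)
    (hcol : G.Collapsible i j)
    (hv : G'.verts = G.verts.erase i)
    (he : G'.edges =
      (G.edges.erase (i, j)).image fun e => if e.2 = i then (e.1, j) else e) :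
    (∀ k ∈ G'.verts, ∀ T, G.IsSpanTree k T → (i, j) ∈ T) ∧
    (∀ k ∈ G'.verts, ∀ b : Fin n × Fin n → ℝ, (∀ e ∈ G.edges, 0 < b e) →
      G.price k b =
        b (i, j) * G'.price k
          (fun e => if e.2 = j ∧ (e.1, i) ∈ G.edges then b (e.1, i) else b e)) ∧
    G'.priceComplexity ≤ G.priceComplexity := by
  have he' : G'.edges = (G.edges.erase (i, j)).image (Stmt10Aux.phi i j) := he
  refine ⟨?_, ?_, ?_⟩
  · intro k hk T hT
    exact Stmt10Aux.ij_mem_tree hcol (Finset.mem_erase.mp (hv ▸ hk)).1 hT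
  · intro k hk b _
    exact Stmt10Aux.price_factor hcol hv he' hk b
  · unfold Money.Digraph.priceComplexity
    apply Finset.sup_le
    rintro ⟨k, l⟩ hp
    obtain ⟨hmem, hkl⟩ := Finset.mem_filter.mp hp
    obtain ⟨hk, hl⟩ := Finset.mem_product.mp hmem
    have hkG : k ∈ G.verts := Finset.mem_of_mem_erase (hv ▸ hk)
    have hlG : l ∈ G.verts := Finset.mem_of_mem_erase (hv ▸ hl)
    have hmem' : ((k, l) : Fin n × Fin n) ∈
        (G.verts ×ˢ G.verts).filter (fun p => p.1 ≠ p.2) :=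
      Finset.mem_filter.mpr ⟨Finset.mem_product.mpr ⟨hkG, hlG⟩, hkl⟩
    have hple : G'.priceCplxPair k l ≤ G.priceCplxPair k l :=
      Stmt10Aux.pair_le hcol hv he' hk hl
    refine le_trans hple ?_
    have h := Finset.le_sup
      (f := fun p : Fin n × Fin n => G.priceCplxPair p.1 p.2) hmem'
    simpa only [] using h
end

section
/- If H is a proper connected subgraph of a connected directed graph G, then there exists a connected subgraph K of G such that H is a proper subgraph of K and c(K) = c(H) + 1. -/
/-!
If `G` has an edge between two vertices of `H` that is missing from `H`, adding it raises the
circuit rank by one. Otherwise `H` is an induced subgraph and misses a vertex of `G`, so some edge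
`a → x` of `G` leaves `H`; as `G` is connected, `x` returns to `H`, and cutting cycles off such a
return walk yields an ear: a path through `k` new vertices with `k + 1` new edges. Attaching it
keeps the graph connected and raises the circuit rank by exactly one.
-/

open scoped Classical

namespace Relation.ReflTransGen

variable {α : Type*} {r : α → α → Prop} {P : α → Prop} {a b : α}

theorem exists_crossing (h : ReflTransGen r a b) (ha : P a) (hb : ¬P b) :
    ∃ c d, P c ∧ ¬P d ∧ r c d := by
  induction h with
  | refl => exact absurd ha hb
  | @tail c d _ hcd ih => exact if hc : P c then ⟨c, d, hc, hb, hcd⟩ else ih hc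

theorem exists_nodup_isChain (h : ReflTransGen r a b) (hb : P b) (ha : ¬P a) :
    ∃ l c, (a :: l).Nodup ∧ (∀ x ∈ a :: l, ¬P x) ∧ P c ∧ (a :: (l ++ [c])).IsChain r := by
  induction h using Relation.ReflTransGen.head_induction_on with
  | refl => exact absurd hb ha
  | @head a d had _ ih =>
    by_cases hd : P d
    · exact ⟨[], d, List.nodup_singleton a, by simpa using ha, hd, List.isChain_pair.mpr had⟩
    obtain ⟨l, c, hnd, hout, hc, hchain⟩ := ih hd
    by_cases hmem : a ∈ d :: l
    · -- cut off the cycle through `a`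
      obtain ⟨pre, suf, hsplit⟩ := List.append_of_mem hmem
      rw [hsplit] at hnd hout
      refine ⟨suf, c, hnd.sublist (List.sublist_append_right _ _),
        fun x hx => hout x (List.mem_append_right _ hx), hc, hchain.suffix ⟨pre, ?_⟩⟩
      simpa using (congrArg (· ++ [c]) hsplit).symm
    · exact ⟨d :: l, c, List.nodup_cons.mpr ⟨hmem, hnd⟩,
        List.forall_mem_cons.mpr ⟨ha, hout⟩, hc, List.isChain_cons_cons.mpr ⟨had, hchain⟩⟩

end Relation.ReflTransGen

namespace Money.Digraph

section PathEdges

variable {α : Type*} [DecidableEq α]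

/-- The edges of the walk `a, p₀, …, pₖ, b`. -/
def pathEdges (a : α) : List α → α → Finset (α × α)
  | [], b => {(a, b)}
  | x :: p, b => insert (a, x) (pathEdges x p b)

variable {a b u v : α} {p : List α}

theorem fst_mem_of_mem_pathEdges (h : (u, v) ∈ pathEdges a p b) : u ∈ a :: p := by
  induction p generalizing a with
  | nil => simp_all [pathEdges]
  | cons x p ih =>
    rcases Finset.mem_insert.mp h with h | h
    · simp_all
    · exact List.mem_cons_of_mem a (ih h)

theorem snd_mem_of_mem_pathEdges (h : (u, v) ∈ pathEdges a p b) : v ∈ p ++ [b] := by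
  induction p generalizing a with
  | nil => simp_all [pathEdges]
  | cons x p ih =>
    rcases Finset.mem_insert.mp h with h | h
    · simp_all
    · exact List.mem_cons_of_mem x (ih h)

theorem fst_mem_or_snd_mem_of_mem_pathEdges_cons {x : α} (h : (u, v) ∈ pathEdges a (x :: p) b) :
    u ∈ x :: p ∨ v ∈ x :: p := by
  rcases Finset.mem_insert.mp h with h | h
  · simp_all
  · exact Or.inl (fst_mem_of_mem_pathEdges h)

theorem card_pathEdges (h : (a :: p).Nodup) : (pathEdges a p b).card = p.length + 1 := by
  induction p generalizing a with
  | nil => simp [pathEdges]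
  | cons x p ih =>
    have ha : (a, x) ∉ pathEdges x p b := fun hax =>
      (List.nodup_cons.mp h).1 (fst_mem_of_mem_pathEdges hax)
    rw [pathEdges, Finset.card_insert_of_notMem ha, ih (List.nodup_cons.mp h).2, List.length_cons]

theorem pathEdges_subset {E : Finset (α × α)}
    (h : (a :: (p ++ [b])).IsChain fun u v => (u, v) ∈ E) : pathEdges a p b ⊆ E := by
  induction p generalizing a with
  | nil => simpa [pathEdges] using h
  | cons x p ih =>
    rw [List.cons_append, List.isChain_cons_cons] at h
    exact Finset.insert_subset h.1 (ih h.2)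

theorem reflTransGen_pathEdges (hu : u ∈ a :: p) :
    Relation.ReflTransGen (fun x y => (x, y) ∈ pathEdges a p b) a u ∧
      Relation.ReflTransGen (fun x y => (x, y) ∈ pathEdges a p b) u b := by
  induction p generalizing a u with
  | nil =>
    obtain rfl := List.mem_singleton.mp hu
    exact ⟨.refl, .single (by simp [pathEdges])⟩
  | cons x p ih =>
    have hmono : ∀ {s t}, Relation.ReflTransGen (fun x' y => (x', y) ∈ pathEdges x p b) s t →
        Relation.ReflTransGen (fun x' y => (x', y) ∈ pathEdges a (x :: p) b) s t :=
      fun hst => Relation.ReflTransGen.mono (fun _ _ h => Finset.mem_insert_of_mem h) _ _ hst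
    have hax : (a, x) ∈ pathEdges a (x :: p) b := Finset.mem_insert_self _ _
    rcases List.mem_cons.mp hu with rfl | hu
    · exact ⟨.refl, .head hax (hmono (ih (u := x) List.mem_cons_self).2)⟩
    · exact ⟨.head hax (hmono (ih hu).1), hmono (ih hu).2⟩

end PathEdges

variable {n : ℕ}

theorem ext {G K : Digraph n} (hv : G.verts = K.verts) (he : G.edges = K.edges) : G = K := by
  cases G; cases K; simp_all

theorem Reaches.mono {G K : Digraph n} (hGK : G.edges ⊆ K.edges) {u v : Fin n}
    (h : G.Reaches u v) : K.Reaches u v :=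
  Relation.ReflTransGen.mono (fun _ _ h => hGK h) _ _ h

theorem Connected.of_isSubgraph {H K : Digraph n} (hH : H.Connected) (hHK : H.IsSubgraph K)
    (hK : ∀ v ∈ K.verts, ∃ a ∈ H.verts, ∃ b ∈ H.verts, K.Reaches a v ∧ K.Reaches v b) :
    K.Connected := by
  refine ⟨hH.1.mono hHK.1, fun i hi j hj => ?_⟩
  obtain ⟨-, -, b, hb, -, hib⟩ := hK i hi
  obtain ⟨a, ha, -, -, haj, -⟩ := hK j hj
  exact hib.trans ((Reaches.mono hHK.2 (hH.2 b hb a ha)).trans haj)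

structure IsEar (G H : Digraph n) (a : Fin n) (p : List (Fin n)) (b : Fin n) : Prop where
  src_mem : a ∈ H.verts
  tgt_mem : b ∈ H.verts
  nodup : p.Nodup
  notMem_verts : ∀ x ∈ p, x ∉ H.verts
  isChain : (a :: (p ++ [b])).IsChain fun u v => (u, v) ∈ G.edges
  disjoint_edges : Disjoint H.edges (pathEdges a p b)

namespace IsEar

variable {G H : Digraph n} {a b : Fin n} {p : List (Fin n)}

theorem pathEdges_subset (h : G.IsEar H a p b) : pathEdges a p b ⊆ G.edges :=
  Money.Digraph.pathEdges_subset h.isChain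

theorem mem_union_of_mem_cons (h : G.IsEar H a p b) {x : Fin n} (hx : x ∈ a :: p) :
    x ∈ H.verts ∪ p.toFinset := by
  rcases List.mem_cons.mp hx with rfl | hx
  exacts [Finset.mem_union_left _ h.src_mem, Finset.mem_union_right _ (List.mem_toFinset.mpr hx)]

def attach (h : G.IsEar H a p b) : Digraph n where
  verts := H.verts ∪ p.toFinset
  edges := H.edges ∪ pathEdges a p b
  mem_verts := by
    rintro ⟨u, v⟩ he
    rcases Finset.mem_union.mp he with he | he
    · exact ⟨Finset.mem_union_left _ (H.mem_verts _ he).1,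
        Finset.mem_union_left _ (H.mem_verts _ he).2⟩
    refine ⟨h.mem_union_of_mem_cons (fst_mem_of_mem_pathEdges he), ?_⟩
    rcases List.mem_append.mp (snd_mem_of_mem_pathEdges he) with hv | hv
    · exact Finset.mem_union_right _ (List.mem_toFinset.mpr hv)
    · exact Finset.mem_union_left _ (List.mem_singleton.mp hv ▸ h.tgt_mem)
  no_loops e he := by
    rcases Finset.mem_union.mp he with he | he
    exacts [H.no_loops e he, G.no_loops e (h.pathEdges_subset he)]

theorem isSubgraph_attach (h : G.IsEar H a p b) : H.IsSubgraph h.attach :=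
  ⟨Finset.subset_union_left, Finset.subset_union_left⟩

theorem attach_isSubgraph (h : G.IsEar H a p b) (hHG : H.IsSubgraph G) :
    h.attach.IsSubgraph G := by
  refine ⟨Finset.union_subset hHG.1 fun x hx => ?_, Finset.union_subset hHG.2 h.pathEdges_subset⟩
  have hx : x ∈ p := List.mem_toFinset.mp hx
  -- `x` lies outside `H`, so the path leaves `x` before reaching `b`
  obtain hxb | ⟨y, hxy, -⟩ :=
    (reflTransGen_pathEdges (b := b) (List.mem_cons_of_mem a hx)).2.cases_head
  · exact absurd (hxb ▸ h.tgt_mem) (h.notMem_verts x hx)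
  · exact (G.mem_verts _ (h.pathEdges_subset hxy)).1

theorem connected_attach (h : G.IsEar H a p b) (hH : H.Connected) : h.attach.Connected := by
  refine hH.of_isSubgraph h.isSubgraph_attach fun v hv => ?_
  rcases Finset.mem_union.mp hv with hv | hv
  · exact ⟨v, hv, v, hv, .refl, .refl⟩
  have hpath := reflTransGen_pathEdges (b := b) (List.mem_cons_of_mem a (List.mem_toFinset.mp hv))
  have hsub : pathEdges a p b ⊆ h.attach.edges := Finset.subset_union_right
  exact ⟨a, h.src_mem, b, h.tgt_mem,
    Relation.ReflTransGen.mono (fun _ _ e => hsub e) _ _ hpath.1,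
    Relation.ReflTransGen.mono (fun _ _ e => hsub e) _ _ hpath.2⟩

theorem circuitRank_attach (h : G.IsEar H a p b) :
    h.attach.circuitRank = H.circuitRank + 1 := by
  have hverts : Disjoint H.verts p.toFinset :=
    Finset.disjoint_right.mpr fun x hx => h.notMem_verts x (List.mem_toFinset.mp hx)
  have hnodup : (a :: p).Nodup :=
    List.nodup_cons.mpr ⟨fun ha => h.notMem_verts a ha h.src_mem, h.nodup⟩
  simp only [circuitRank, attach, Finset.card_union_of_disjoint h.disjoint_edges,
    Finset.card_union_of_disjoint hverts, card_pathEdges hnodup, List.toFinset_card_of_nodup h.nodup]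
  push_cast
  ring

end IsEar

theorem isEar_nil {G H : Digraph n} {a b : Fin n} (hab : (a, b) ∈ G.edges) (ha : a ∈ H.verts)
    (hb : b ∈ H.verts) (hnot : (a, b) ∉ H.edges) : G.IsEar H a [] b where
  src_mem := ha
  tgt_mem := hb
  nodup := List.nodup_nil
  notMem_verts := by simp
  isChain := List.isChain_pair.mpr hab
  disjoint_edges := by simpa [pathEdges] using hnot

theorem exists_isEar_of_notMem_verts {G H : Digraph n} (hG : G.Connected)
    (hH : H.verts.Nonempty) (hHG : H.verts ⊆ G.verts) {u : Fin n} (huG : u ∈ G.verts)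
    (huH : u ∉ H.verts) : ∃ a p b, G.IsEar H a p b := by
  obtain ⟨h₀, hh₀⟩ := hH
  obtain ⟨a, x, ha, hx, hax⟩ := (hG.2 h₀ (hHG hh₀) u huG).exists_crossing hh₀ huH
  obtain ⟨l, b, hnd, hout, hb, hchain⟩ :=
    (hG.2 x (G.mem_verts _ hax).2 h₀ (hHG hh₀)).exists_nodup_isChain hh₀ hx
  refine ⟨a, x :: l, b, ha, hb, hnd, hout, List.isChain_cons_cons.mpr ⟨hax, hchain⟩, ?_⟩
  refine Finset.disjoint_left.mpr fun ⟨v, w⟩ hH hP => ?_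
  rcases fst_mem_or_snd_mem_of_mem_pathEdges_cons hP with hv | hw
  exacts [hout v hv (H.mem_verts _ hH).1, hout w hw (H.mem_verts _ hH).2]

theorem exists_isEar {G H : Digraph n} (hG : G.Connected) (hH : H.verts.Nonempty)
    (hHG : H.IsSubgraph G) (hne : H ≠ G) : ∃ a p b, G.IsEar H a p b := by
  by_cases hchord : ∃ e ∈ G.edges, e.1 ∈ H.verts ∧ e.2 ∈ H.verts ∧ e ∉ H.edges
  · obtain ⟨⟨a, b⟩, hab, ha, hb, hnot⟩ := hchord
    exact ⟨a, [], b, isEar_nil hab ha hb hnot⟩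
  push Not at hchord
  -- `H` is an induced subgraph, so it must miss a vertex of `G`
  obtain ⟨u, huG, huH⟩ : ∃ u ∈ G.verts, u ∉ H.verts := by
    by_contra! hverts
    have hv : H.verts = G.verts := hHG.1.antisymm hverts
    refine hne (ext hv (hHG.2.antisymm fun e he => hchord e he ?_ ?_))
    exacts [hv ▸ (G.mem_verts e he).1, hv ▸ (G.mem_verts e he).2]
  exact exists_isEar_of_notMem_verts hG hH hHG.1 huG huH

end Money.Digraph

open Money Money.Digraph

/-- any proper connected subgraph `H` of a connected graph `G`
can be augmented inside `G` to a connected `K ⊇ H` with `c(K) = c(H) + 1`. -/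
theorem stmt13 {n : ℕ} (G H : Money.Digraph n) (hG : G.Connected)
    (hH : H.Connected) (hsub : H.IsSubgraph G) (hproper : H ≠ G) :
    ∃ K : Money.Digraph n, K.IsSubgraph G ∧ K.Connected ∧
      H.IsSubgraph K ∧ H ≠ K ∧ K.circuitRank = H.circuitRank + 1 := by
  obtain ⟨a, p, b, hear⟩ := exists_isEar hG hH.1 hsub hproper
  have hrank := hear.circuitRank_attach
  refine ⟨hear.attach, hear.attach_isSubgraph hsub, hear.connected_attach hH,
    hear.isSubgraph_attach, fun hHK => ?_, hrank⟩
  rw [← hHK] at hrank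
  omega
end

section
/- Let G be a connected directed graph. Then: (1) if G has at least 3 vertices, an ordinary vertex cannot cover another vertex; (2) if G has at least 4 vertices, a binary vertex covers at most one vertex; (3) a tertiary vertex covers at most three vertices; (4) if G is rigid and c(G) = 3, then G has at most 4 vertices. -/
open scoped Classical

open Money Money.Digraph


section StmtHelpers

namespace Money.Digraph

variable {n : ℕ}

lemma out_unique (G : Digraph n) {i j j' : Fin n} (h1 : G.outdeg i = 1)
    (hj : (i, j) ∈ G.edges) (hj' : (i, j') ∈ G.edges) : j' = j := by
  have hm : (i, j) ∈ G.edges.filter fun e => e.1 = i := Finset.mem_filter.mpr ⟨hj, rfl⟩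
  have hm' : (i, j') ∈ G.edges.filter fun e => e.1 = i := Finset.mem_filter.mpr ⟨hj', rfl⟩
  have h := Finset.card_le_one.mp (le_of_eq h1) _ hm' _ hm
  exact congrArg Prod.snd h

lemma out_two (G : Digraph n) {k a b c : Fin n} (h2 : G.outdeg k = 2)
    (hab : a ≠ b) (ha : (k, a) ∈ G.edges) (hb : (k, b) ∈ G.edges)
    (hc : (k, c) ∈ G.edges) : c = a ∨ c = b := by
  by_contra h
  push_neg at h
  have hsub : ({(k,a), (k,b), (k,c)} : Finset (Fin n × Fin n)) ⊆
      G.edges.filter fun e => e.1 = k := by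
    intro e he
    simp only [Finset.mem_insert, Finset.mem_singleton] at he
    rcases he with rfl|rfl|rfl <;> exact Finset.mem_filter.mpr ⟨by assumption, rfl⟩
  have hcard : ({(k,a), (k,b), (k,c)} : Finset (Fin n × Fin n)).card = 3 := by
    rw [Finset.card_insert_of_notMem (by simp [Prod.ext_iff]; tauto),
      Finset.card_insert_of_notMem (by simp [Prod.ext_iff]; tauto), Finset.card_singleton]
  have hle := Finset.card_le_card hsub
  rw [hcard] at hle
  rw [outdeg] at h2
  omega

lemma verts_subset_closed (G : Digraph n) (hG : G.Connected) {A : Finset (Fin n)} {i : Fin n}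
    (hi : i ∈ G.verts) (hiA : i ∈ A)
    (hcl : ∀ a ∈ A, ∀ b, (a, b) ∈ G.edges → b ∈ A) : G.verts ⊆ A := by
  have key : ∀ j, G.Reaches i j → j ∈ A := by
    intro j hr
    induction hr with
    | refl => exact hiA
    | tail _ h ih => exact hcl _ ih _ h
  exact fun j hj => key j (hG.2 i hi j hj)

lemma exists_out (G : Digraph n) {i : Fin n} (h : 1 ≤ G.outdeg i) : ∃ j, (i, j) ∈ G.edges := by
  obtain ⟨e, he⟩ := Finset.card_pos.mp h
  obtain ⟨a, b⟩ := e
  obtain ⟨he1, he2⟩ := Finset.mem_filter.mp he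
  simp only at he2
  subst he2
  exact ⟨b, he1⟩

lemma outdeg_pos (G : Digraph n) (hG : G.Connected) (h2 : 2 ≤ G.verts.card)
    {i : Fin n} (hi : i ∈ G.verts) : 1 ≤ G.outdeg i := by
  obtain ⟨j, hj, hne⟩ : ∃ j ∈ G.verts, j ≠ i := by
    by_contra h
    push_neg at h
    have hsub : G.verts ⊆ {i} := fun x hx => Finset.mem_singleton.mpr (h x hx)
    have := Finset.card_le_card hsub
    simp at this
    omega
  rcases Relation.ReflTransGen.cases_head (hG.2 i hi j hj) with heq | ⟨c, hc, _⟩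
  · exact absurd heq.symm hne
  · exact Finset.card_pos.mpr ⟨(i, c), Finset.mem_filter.mpr ⟨hc, rfl⟩⟩

lemma covers_edge (G : Digraph n) {k i : Fin n} (h : G.Covers k i) : (k, i) ∈ G.edges := by
  obtain ⟨_, j, hij, h⟩ := h
  rcases h with ⟨h, _⟩ | ⟨rfl, h⟩ <;> exact h

lemma covered_of_rigid (G : Digraph n) (hrig : G.Rigid) {i : Fin n} (h1 : G.outdeg i = 1) :
    ∃ k, G.Covers k i := by
  obtain ⟨j, hj⟩ := G.exists_out h1.ge
  by_cases hji : (j, i) ∈ G.edges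
  · exact ⟨j, h1, j, hj, Or.inr ⟨rfl, hji⟩⟩
  · by_contra hk
    push_neg at hk
    exact hrig i j ⟨hj, h1, hji, fun k hkk => hk k ⟨h1, j, hj, Or.inl ⟨hkk.1, hkk.2⟩⟩⟩

lemma card_edges_eq_sum (G : Digraph n) : G.edges.card = ∑ v ∈ G.verts, G.outdeg v :=
  Finset.card_eq_sum_card_fiberwise fun e he => (G.mem_verts e he).1

end Money.Digraph

end StmtHelpers

/-- covering bounds and the bound `v(G) ≤ 4` for rigid connected
graphs of circuit rank `3`. -/
theorem stmt16 {n : ℕ} (G : Money.Digraph n) (hG : G.Connected) :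
    (3 ≤ G.verts.card → ∀ k ∈ G.verts, G.outdeg k = 1 → ∀ i, ¬G.Covers k i) ∧
    (4 ≤ G.verts.card → ∀ k ∈ G.verts, G.outdeg k = 2 →
      (G.verts.filter fun i => G.Covers k i).card ≤ 1) ∧
    (∀ k ∈ G.verts, G.outdeg k = 3 →
      (G.verts.filter fun i => G.Covers k i).card ≤ 3) ∧
    (G.Rigid → G.circuitRank = 3 → G.verts.card ≤ 4) := by
  classical
  -- Part 1
  have p1 : 3 ≤ G.verts.card → ∀ k ∈ G.verts, G.outdeg k = 1 → ∀ i, ¬G.Covers k i := by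
    intro h3 k hk hdk i hcov
    obtain ⟨h1i, j, hij, hc⟩ := hcov
    have hij_ne : i ≠ j := G.no_loops _ hij
    rcases hc with ⟨hki, hkj⟩ | ⟨rfl, hji⟩
    · exact hij_ne (G.out_unique hdk hkj hki)
    · have hcl : ∀ a ∈ ({i, k} : Finset (Fin n)), ∀ b, (a, b) ∈ G.edges →
          b ∈ ({i, k} : Finset (Fin n)) := by
        intro a ha b hb
        rcases Finset.mem_insert.mp ha with rfl | ha
        · rw [G.out_unique h1i hij hb]; simp
        · rw [Finset.mem_singleton] at ha; subst ha
          rw [G.out_unique hdk hji hb]; simp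
      have hiv : i ∈ G.verts := (G.mem_verts _ hij).1
      have hsub := G.verts_subset_closed hG hiv (by simp) hcl
      have hcard := Finset.card_le_card hsub
      have h2 : ({i, k} : Finset (Fin n)).card ≤ 2 :=
        (Finset.card_insert_le _ _).trans (by simp)
      omega
  -- Part 2
  have p2 : 4 ≤ G.verts.card → ∀ k ∈ G.verts, G.outdeg k = 2 →
      (G.verts.filter fun i => G.Covers k i).card ≤ 1 := by
    intro h4 k hk hdk
    rw [Finset.card_le_one]
    intro i hi i' hi'
    by_contra hne
    obtain ⟨hiv, d1, j, hij, hc⟩ := Finset.mem_filter.mp hi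
    obtain ⟨hiv', d1', j', hij', hc'⟩ := Finset.mem_filter.mp hi'
    have hij_ne : i ≠ j := G.no_loops _ hij
    have hij_ne' : i' ≠ j' := G.no_loops _ hij'
    suffices h : ∃ A : Finset (Fin n), A.card ≤ 3 ∧ i ∈ A ∧
        (∀ a ∈ A, ∀ b, (a, b) ∈ G.edges → b ∈ A) by
      obtain ⟨A, hA3, hiA, hcl⟩ := h
      have hiv2 : i ∈ G.verts := (G.mem_verts _ hij).1
      have := Finset.card_le_card (G.verts_subset_closed hG hiv2 hiA hcl)
      omega
    have card3 : ∀ a b c : Fin n, ({a, b, c} : Finset (Fin n)).card ≤ 3 := by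
      intro a b c
      refine (Finset.card_insert_le _ _).trans ?_
      have := Finset.card_insert_le b ({c} : Finset (Fin n))
      simp at this ⊢
      omega
    rcases hc with ⟨hki, hkj⟩ | ⟨hkj, hji⟩ <;> rcases hc' with ⟨hki', hkj'⟩ | ⟨hkj', hji'⟩
    · -- LL
      have hj : j = i' := by
        rcases G.out_two hdk hne hki hki' hkj with h | h
        · exact absurd h.symm hij_ne
        · exact h
      have hj' : j' = i := by
        rcases G.out_two hdk hne hki hki' hkj' with h | h
        · exact h
        · exact absurd h.symm hij_ne'
      refine ⟨({i, i'} : Finset (Fin n)), (Finset.card_insert_le _ _).trans (by simp),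
        by simp, ?_⟩
      intro a ha b hb
      rcases Finset.mem_insert.mp ha with rfl | ha
      · rw [G.out_unique d1 hij hb, hj]; simp
      · rw [Finset.mem_singleton] at ha; subst ha
        rw [G.out_unique d1' hij' hb, hj']; simp
    · -- L R : k = j'
      rw [← hkj'] at hij' hji'
      have hj : j = i' := by
        rcases G.out_two hdk hij_ne.symm hkj hki hji' with h | h
        · exact h.symm
        · exact absurd h.symm hne
      refine ⟨({i, i', k} : Finset (Fin n)), card3 _ _ _, by simp, ?_⟩
      intro a ha b hb
      simp only [Finset.mem_insert, Finset.mem_singleton] at ha ⊢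
      rcases ha with rfl | rfl | rfl
      · rw [G.out_unique d1 hij hb, hj]; tauto
      · rw [G.out_unique d1' hij' hb]; tauto
      · rcases G.out_two hdk hne hki hji' hb with h | h <;> tauto
    · -- R L : k = j
      rw [← hkj] at hij hji
      have hj' : j' = i := by
        rcases G.out_two hdk (Ne.symm hne) hki' hji hkj' with h | h
        · exact absurd h hij_ne'.symm
        · exact h
      refine ⟨({i, i', k} : Finset (Fin n)), card3 _ _ _, by simp, ?_⟩
      intro a ha b hb
      simp only [Finset.mem_insert, Finset.mem_singleton] at ha ⊢
      rcases ha with rfl | rfl | rfl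
      · rw [G.out_unique d1 hij hb]; tauto
      · rw [G.out_unique d1' hij' hb, hj']; tauto
      · rcases G.out_two hdk hne hji hki' hb with h | h <;> tauto
    · -- R R : k = j = j'
      rw [← hkj] at hij hji
      rw [← hkj'] at hij' hji'
      refine ⟨({i, i', k} : Finset (Fin n)), card3 _ _ _, by simp, ?_⟩
      intro a ha b hb
      simp only [Finset.mem_insert, Finset.mem_singleton] at ha ⊢
      rcases ha with rfl | rfl | rfl
      · rw [G.out_unique d1 hij hb]; tauto
      · rw [G.out_unique d1' hij' hb]; tauto
      · rcases G.out_two hdk hne hji hji' hb with h | h <;> tauto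
  -- Part 3
  have p3 : ∀ k ∈ G.verts, G.outdeg k = 3 →
      (G.verts.filter fun i => G.Covers k i).card ≤ 3 := by
    intro k hk hdk
    have hle : (G.verts.filter fun i => G.Covers k i).card ≤ G.outdeg k := by
      apply Finset.card_le_card_of_injOn (fun i => (k, i))
      · intro i hi
        exact Finset.mem_filter.mpr ⟨G.covers_edge (Finset.mem_filter.mp hi).2, rfl⟩
      · intro a _ b _ h
        exact congrArg Prod.snd h
    omega
  refine ⟨p1, p2, p3, ?_⟩
  -- Part 4
  intro hrig hcr
  by_contra hlt
  push_neg at hlt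
  have h5 : 5 ≤ G.verts.card := hlt
  have he : G.edges.card = G.verts.card + 2 := by
    have h := hcr
    rw [circuitRank] at h
    omega
  have hsum := G.card_edges_eq_sum
  have hpos : ∀ x ∈ G.verts, 1 ≤ G.outdeg x := fun x hx => G.outdeg_pos hG (by omega) hx
  have hle3 : ∀ x ∈ G.verts, G.outdeg x ≤ 3 := by
    intro x hx
    by_contra hgt
    push_neg at hgt
    have h1 : ∑ v ∈ G.verts.erase x, G.outdeg v + G.outdeg x = ∑ v ∈ G.verts, G.outdeg v :=
      Finset.sum_erase_add _ _ hx
    have h2 : (G.verts.erase x).card ≤ ∑ v ∈ G.verts.erase x, G.outdeg v := by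
      rw [Finset.card_eq_sum_ones]
      exact Finset.sum_le_sum fun y hy => hpos y (Finset.mem_of_mem_erase hy)
    have h3 : (G.verts.erase x).card = G.verts.card - 1 := Finset.card_erase_of_mem hx
    omega
  set S := G.verts.filter (fun x => G.outdeg x = 1) with hS
  set B := G.verts.filter (fun x => G.outdeg x = 2) with hB
  set T := G.verts.filter (fun x => G.outdeg x = 3) with hT
  have hvertseq : G.verts = S ∪ (B ∪ T) := by
    rw [hS, hB, hT, ← Finset.filter_or, ← Finset.filter_or]
    exact (Finset.filter_true_of_mem
      (fun x hx => by have := hpos x hx; have := hle3 x hx; omega)).symm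
  have hdisjBT : Disjoint B T := by
    rw [Finset.disjoint_left]
    intro a ha ha'
    have h1 := (Finset.mem_filter.mp ha).2
    have h2 := (Finset.mem_filter.mp ha').2
    omega
  have hdisjS : Disjoint S (B ∪ T) := by
    rw [Finset.disjoint_left]
    intro a ha ha'
    have h1 := (Finset.mem_filter.mp ha).2
    rcases Finset.mem_union.mp ha' with h | h
    · have h2 := (Finset.mem_filter.mp h).2; omega
    · have h2 := (Finset.mem_filter.mp h).2; omega
  have hvcard : G.verts.card = S.card + (B.card + T.card) := by
    rw [hvertseq, Finset.card_union_of_disjoint hdisjS, Finset.card_union_of_disjoint hdisjBT]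
  have hsum2 : ∑ v ∈ G.verts, G.outdeg v = S.card * 1 + (B.card * 2 + T.card * 3) := by
    rw [hvertseq, Finset.sum_union hdisjS, Finset.sum_union hdisjBT]
    have e1 : ∑ x ∈ S, G.outdeg x = S.card * 1 := by
      rw [Finset.sum_congr rfl (fun x hx => (Finset.mem_filter.mp hx).2),
        Finset.sum_const, smul_eq_mul]
    have e2 : ∑ x ∈ B, G.outdeg x = B.card * 2 := by
      rw [Finset.sum_congr rfl (fun x hx => (Finset.mem_filter.mp hx).2),
        Finset.sum_const, smul_eq_mul]
    have e3 : ∑ x ∈ T, G.outdeg x = T.card * 3 := by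
      rw [Finset.sum_congr rfl (fun x hx => (Finset.mem_filter.mp hx).2),
        Finset.sum_const, smul_eq_mul]
    rw [e1, e2, e3]
  have hSsub : S ⊆ (B ∪ T).biUnion (fun k => G.verts.filter fun i => G.Covers k i) := by
    intro i hiS
    obtain ⟨hiv, hd1⟩ := Finset.mem_filter.mp hiS
    obtain ⟨k, hcov⟩ := G.covered_of_rigid hrig hd1
    have hkE : (k, i) ∈ G.edges := G.covers_edge hcov
    have hkv : k ∈ G.verts := (G.mem_verts _ hkE).1
    have hknot1 : G.outdeg k ≠ 1 := fun h => p1 (by omega) k hkv h i hcov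
    apply Finset.mem_biUnion.mpr
    refine ⟨k, ?_, Finset.mem_filter.mpr ⟨hiv, hcov⟩⟩
    have hk1 := hpos k hkv
    have hk3 := hle3 k hkv
    rw [Finset.mem_union]
    have h23 : G.outdeg k = 2 ∨ G.outdeg k = 3 := by omega
    rcases h23 with h | h
    · exact Or.inl (Finset.mem_filter.mpr ⟨hkv, h⟩)
    · exact Or.inr (Finset.mem_filter.mpr ⟨hkv, h⟩)
  have hScard : S.card ≤ B.card * 1 + T.card * 3 := by
    calc S.card ≤ ((B ∪ T).biUnion (fun k => G.verts.filter fun i => G.Covers k i)).card :=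
          Finset.card_le_card hSsub
      _ ≤ ∑ k ∈ B ∪ T, (G.verts.filter fun i => G.Covers k i).card := Finset.card_biUnion_le
      _ = ∑ k ∈ B, (G.verts.filter fun i => G.Covers k i).card
          + ∑ k ∈ T, (G.verts.filter fun i => G.Covers k i).card := Finset.sum_union hdisjBT
      _ ≤ B.card * 1 + T.card * 3 := by
          apply add_le_add
          · calc ∑ k ∈ B, (G.verts.filter fun i => G.Covers k i).card
                ≤ ∑ _k ∈ B, 1 := Finset.sum_le_sum fun k hk =>
                    p2 (by omega) k (Finset.mem_filter.mp hk).1 (Finset.mem_filter.mp hk).2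
              _ = B.card * 1 := by rw [Finset.sum_const, smul_eq_mul]
          · calc ∑ k ∈ T, (G.verts.filter fun i => G.Covers k i).card
                ≤ ∑ _k ∈ T, 3 := Finset.sum_le_sum fun k hk =>
                    p3 k (Finset.mem_filter.mp hk).1 (Finset.mem_filter.mp hk).2
              _ = T.card * 3 := by rw [Finset.sum_const, smul_eq_mul]
  omega
end

section
/- If G is a chorded cycle on 4 or more vertices, then τ(G) ≥ 3. -/
open scoped Classical

/-
In a chorded cycle `C ∪ P` with chord `P` from `s` to `t`, every vertex other than `t` has a
unique in-neighbour, and `t` has a unique out-neighbour `t'`. Pick a vertex `j ∉ {t, t'}`, its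
in-neighbour `x` (which is not `t`) and the in-neighbour `y` of `x`. Only `j`, `x`, `y` can reach
`j` in at most two steps, so with four or more vertices some `i` has `dist i j ≥ 3`.
-/

namespace Money

namespace Digraph

variable {n : ℕ} {G H : Digraph n} {i j v x y : Fin n}

theorem existsUnique_inNeighbor_of_indeg_eq_one (h : G.indeg v = 1) :
    ∃! x, (x, v) ∈ G.edges := by
  obtain ⟨e, he, hu⟩ := Finset.card_eq_one_iff_existsUnique.mp h
  obtain ⟨hmem, rfl⟩ := Finset.mem_filter.mp he
  exact ⟨e.1, hmem, fun y hy =>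
    congrArg Prod.fst (hu (y, e.2) (Finset.mem_filter.mpr ⟨hy, rfl⟩))⟩

theorem existsUnique_outNeighbor_of_outdeg_eq_one (h : G.outdeg v = 1) :
    ∃! x, (v, x) ∈ G.edges := by
  obtain ⟨e, he, hu⟩ := Finset.card_eq_one_iff_existsUnique.mp h
  obtain ⟨hmem, rfl⟩ := Finset.mem_filter.mp he
  exact ⟨e.2, hmem, fun y hy =>
    congrArg Prod.snd (hu (e.1, y) (Finset.mem_filter.mpr ⟨hy, rfl⟩))⟩

theorem notMem_edges_of_indeg_eq_zero (h : G.indeg v = 0) (x : Fin n) : (x, v) ∉ G.edges :=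
  fun hx => Finset.card_filter_eq_zero_iff.mp h _ hx rfl

theorem notMem_edges_of_outdeg_eq_zero (h : G.outdeg v = 0) (x : Fin n) : (v, x) ∉ G.edges :=
  fun hx => Finset.card_filter_eq_zero_iff.mp h _ hx rfl

theorem mem_union_edges {e : Fin n × Fin n} :
    e ∈ (G.union H).edges ↔ e ∈ G.edges ∨ e ∈ H.edges :=
  Finset.mem_union

theorem mem_union_verts : v ∈ (G.union H).verts ↔ v ∈ G.verts ∨ v ∈ H.verts :=
  Finset.mem_union

theorem Reaches.union_left (h : G.Reaches i j) : (G.union H).Reaches i j :=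
  Relation.ReflTransGen.mono (fun _ _ => Finset.mem_union_left _) _ _ h

theorem Reaches.union_right (h : H.Reaches i j) : (G.union H).Reaches i j :=
  Relation.ReflTransGen.mono (fun _ _ => Finset.mem_union_right _) _ _ h

theorem Reaches.exists_hasWalk (h : G.Reaches i j) : ∃ k, G.HasWalk i j k := by
  induction h with
  | refl => exact ⟨0, fun _ => i, rfl, rfl, fun t ht => absurd ht (Nat.not_lt_zero t)⟩
  | @tail b c _ hbc ih =>
    obtain ⟨k, g, hg0, hgk, hstep⟩ := ih
    refine ⟨k + 1, fun m => if m ≤ k then g m else c, by simp [hg0], by simp, fun t ht => ?_⟩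
    rcases Nat.lt_or_ge t k with htk | htk
    · simpa [htk.le, Nat.succ_le_of_lt htk] using hstep t htk
    · obtain rfl : t = k := by omega
      simpa [hgk] using hbc

theorem le_dist_of_forall_hasWalk {m : ℕ} (hij : G.Reaches i j)
    (h : ∀ k, G.HasWalk i j k → m ≤ k) : m ≤ G.dist i j :=
  h _ (Nat.sInf_mem hij.exists_hasWalk)

theorem dist_le_timeComplexity (hi : i ∈ G.verts) (hj : j ∈ G.verts) (hij : i ≠ j) :
    G.dist i j ≤ G.timeComplexity :=
  Finset.le_sup (f := fun p : Fin n × Fin n => G.dist p.1 p.2) (b := (i, j))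
    (Finset.mem_filter.mpr ⟨Finset.mem_product.mpr ⟨hi, hj⟩, hij⟩)

theorem eq_or_eq_or_eq_of_hasWalk {k : ℕ} (hj : ∀ a, (a, j) ∈ G.edges → a = x)
    (hx : ∀ a, (a, x) ∈ G.edges → a = y) (hw : G.HasWalk i j k) (hk : k ≤ 2) :
    i = j ∨ i = x ∨ i = y := by
  obtain ⟨g, rfl, rfl, hstep⟩ := hw
  interval_cases k
  · exact .inl rfl
  · exact .inr (.inl (hj _ (hstep 0 one_pos)))
  · have hg1 : g 1 = x := hj _ (hstep 1 one_lt_two)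
    exact .inr (.inr (hx _ (hg1 ▸ hstep 0 two_pos)))

theorem three_le_timeComplexity_of_unique_inNeighbor {t t' : Fin n} (hG : G.Connected)
    (hin : ∀ v ∈ G.verts, v ≠ t → ∃! x, (x, v) ∈ G.edges)
    (hout : ∀ z, (t, z) ∈ G.edges → z = t') (hcard : 4 ≤ G.verts.card) :
    3 ≤ G.timeComplexity := by
  obtain ⟨j, hj, hjtt'⟩ := Finset.exists_mem_notMem_of_card_lt_card (t := G.verts)
    ((Finset.card_le_two (a := t) (b := t')).trans_lt (by omega))
  have hjt : j ≠ t := fun h => hjtt' (by simp [h])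
  have hjt' : j ≠ t' := fun h => hjtt' (by simp [h])
  obtain ⟨x, hxj, hxu⟩ := hin j hj hjt
  have hxt : x ≠ t := fun h => hjt' (hout j (h ▸ hxj))
  obtain ⟨y, -, hyu⟩ := hin x (G.mem_verts _ hxj).1 hxt
  obtain ⟨i, hi, hijxy⟩ := Finset.exists_mem_notMem_of_card_lt_card (t := G.verts)
    ((Finset.card_le_three (a := j) (b := x) (c := y)).trans_lt (by omega))
  have hij : i ≠ j := fun h => hijxy (by simp [h])
  calc 3 ≤ G.dist i j := le_dist_of_forall_hasWalk (hG.2 i hi j hj) fun k hw => by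
          by_contra! hk
          rcases eq_or_eq_or_eq_of_hasWalk hxu hyu hw (by omega) with h | h | h <;>
            exact hijxy (by simp [h])
    _ ≤ G.timeComplexity := dist_le_timeComplexity hi hj hij

section ChordedCycle

variable {C P : Digraph n} {s t : Fin n}

theorem IsCycleGraph.union_connected (hC : C.IsCycleGraph) (hP : P.IsPathGraph s t)
    (hsC : s ∈ C.verts) (htC : t ∈ C.verts) : (C.union P).Connected := by
  have reaches_t : ∀ v ∈ (C.union P).verts, (C.union P).Reaches v t := fun v hv =>
    (mem_union_verts.mp hv).elim (fun h => (hC.1.2 v h t htC).union_left)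
      fun h => (hP.2.2.2.1 v h).2.union_right
  have t_reaches : ∀ v ∈ (C.union P).verts, (C.union P).Reaches t v := fun v hv =>
    (mem_union_verts.mp hv).elim (fun h => (hC.1.2 t htC v h).union_left)
      fun h => (hC.1.2 t htC s hsC).union_left.trans (hP.2.2.2.1 v h).1.union_right
  exact ⟨⟨s, mem_union_verts.mpr (.inl hsC)⟩,
    fun i hi j hj => (reaches_t i hi).trans (t_reaches j hj)⟩

theorem IsCycleGraph.existsUnique_union_inNeighbor (hC : C.IsCycleGraph)
    (hP : P.IsPathGraph s t) (hsC : s ∈ C.verts) (hPC : P.verts ∩ C.verts = {s, t})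
    (hv : v ∈ (C.union P).verts) (hvt : v ≠ t) : ∃! x, (x, v) ∈ (C.union P).edges := by
  by_cases hvC : v ∈ C.verts
  · obtain ⟨x, hx, hxu⟩ := existsUnique_inNeighbor_of_indeg_eq_one (hC.2 v hvC).2
    refine ⟨x, mem_union_edges.mpr (.inl hx), fun y hy => ?_⟩
    refine (mem_union_edges.mp hy).elim (hxu y) fun hyP => ?_
    -- a chord edge can enter the cycle only at `t`, since `s` has in-degree `0` in `P`
    have hv' : v ∈ ({s, t} : Finset (Fin n)) :=
      hPC ▸ Finset.mem_inter.mpr ⟨(P.mem_verts _ hyP).2, hvC⟩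
    obtain rfl : v = s := by simpa [hvt] using hv'
    exact absurd hyP (notMem_edges_of_indeg_eq_zero hP.2.2.2.2.2.2.2 y)
  · have hvP : v ∈ P.verts := (mem_union_verts.mp hv).resolve_left hvC
    obtain ⟨x, hx, hxu⟩ := existsUnique_inNeighbor_of_indeg_eq_one
      (hP.2.2.2.2.2.2.1 v hvP fun h => hvC (h ▸ hsC))
    exact ⟨x, mem_union_edges.mpr (.inr hx), fun y hy =>
      (mem_union_edges.mp hy).elim (fun h => absurd (C.mem_verts _ h).2 hvC) (hxu y)⟩

theorem IsCycleGraph.existsUnique_union_outNeighbor (hC : C.IsCycleGraph)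
    (hP : P.IsPathGraph s t) (htC : t ∈ C.verts) : ∃! z, (t, z) ∈ (C.union P).edges := by
  obtain ⟨z, hz, hzu⟩ := existsUnique_outNeighbor_of_outdeg_eq_one (hC.2 t htC).1
  exact ⟨z, mem_union_edges.mpr (.inl hz), fun y hy => (mem_union_edges.mp hy).elim (hzu y)
    fun h => absurd h (notMem_edges_of_outdeg_eq_zero hP.2.2.2.2.2.1 y)⟩

end ChordedCycle

end Digraph

end Money

open Money Money.Digraph

/-- a chorded cycle on at least `4` vertices has `τ(G) ≥ 3`. -/
theorem stmt18 {n : ℕ} (G : Money.Digraph n) (hG : G.IsChordedCycle)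
    (hm : 4 ≤ G.verts.card) :
    3 ≤ G.timeComplexity := by
  obtain ⟨C, P, s, t, hC, hP, hsC, htC, hPC, -, rfl⟩ := hG
  obtain ⟨t', -, ht'⟩ := hC.existsUnique_union_outNeighbor hP htC
  exact three_le_timeComplexity_of_unique_inNeighbor (hC.union_connected hP hsC htC)
    (fun _ hv hvt => hC.existsUnique_union_inNeighbor hP hsC hPC hv hvt) ht' hm
end

section
/- If G is the complete directed graph on m ≥ 2 vertices (all edges ij with i ≠ j), then π_ij(G) = m(m−1) for every pair of vertices i ≠ j; that is, every edge weight is influential for every price-ratio function. -/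
open scoped Classical

open Money Money.Digraph

/-!
Spanning `r`-trees of the complete digraph are the edge sets `{(v, σ v) | v ≠ r}` of maps `σ`
along which every vertex flows to `r`. An edge `(i, l)` leaving `i` lies in no `i`-tree, so
`p_i` ignores its weight while `p_j` strictly increases with it. For an edge `(k, l)` with
`k ∉ {i, j}` (the remaining cases follow by exchanging `i` and `j`), degenerate weights carried
by one map `σ` and the edge `(k, l)` leave only two candidate trees per root, making `p_j`
constant and `p_i` of the form `c + b_kl`; by continuity a small positive perturbation of these
weights still makes the ratio depend on `b_kl`.
-/

namespace Money

section FlowsTo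

variable {α : Type*} {σ : α → α} {r : α}

def FlowsTo (σ : α → α) (r : α) : Prop :=
  ∀ v, Relation.ReflTransGen (fun a b => a ≠ r ∧ σ a = b) v r

theorem FlowsTo.of_rank (rank : α → ℕ) (h : ∀ v, v ≠ r → rank (σ v) < rank v) :
    FlowsTo σ r := by
  intro v
  induction hv : rank v using Nat.strong_induction_on generalizing v with
  | _ k ih =>
    by_cases hvr : v = r
    · exact hvr ▸ .refl
    · exact .head ⟨hvr, rfl⟩ (ih _ (hv ▸ h v hvr) _ rfl)

theorem not_flowsTo_of_mapsTo {S : Set α} (hS : Set.MapsTo σ S S) (hr : r ∉ S) {v : α}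
    (hv : v ∈ S) : ¬FlowsTo σ r := by
  intro h
  induction h v using Relation.ReflTransGen.head_induction_on with
  | refl => exact hr hv
  | head hab _ ih => exact ih (hab.2 ▸ hS hv)

theorem FlowsTo.apply_ne (h : FlowsTo σ r) {v : α} (hv : v ≠ r) : σ v ≠ v := fun hσv =>
  not_flowsTo_of_mapsTo (S := {v}) (by simpa [Set.MapsTo] using hσv) (Ne.symm hv) rfl h

end FlowsTo

namespace Digraph

variable {n : ℕ} {G : Digraph n} {r : Fin n} {σ : Fin n → Fin n}

def treeOf (r : Fin n) (σ : Fin n → Fin n) : Finset (Fin n × Fin n) :=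
  (Finset.univ.erase r).image fun v => (v, σ v)

theorem mem_treeOf {a b : Fin n} : (a, b) ∈ treeOf r σ ↔ a ≠ r ∧ σ a = b := by
  simp [treeOf, and_comm]

theorem treeOf_congr {σ' : Fin n → Fin n} (h : ∀ v, v ≠ r → σ v = σ' v) :
    treeOf r σ = treeOf r σ' := by
  ext ⟨a, b⟩
  simp only [mem_treeOf]
  exact and_congr_right fun ha => by rw [h a ha]

theorem prod_treeOf {M : Type*} [CommMonoid M] (r : Fin n) (σ : Fin n → Fin n)
    (b : Fin n × Fin n → M) :
    ∏ f ∈ treeOf r σ, b f = ∏ v ∈ Finset.univ.erase r, b (v, σ v) :=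
  Finset.prod_image fun _ _ _ _ h => (Prod.mk.inj h).1

theorem isSpanTree_treeOf_iff (hG : G.IsComplete) :
    G.IsSpanTree r (treeOf r σ) ↔ FlowsTo σ r := by
  refine ⟨fun h v => Relation.ReflTransGen.mono (fun _ _ => mem_treeOf.1) _ _
    (h.2.2.2 v (hG.1 ▸ Finset.mem_univ v)), fun h => ⟨?_, ?_, ?_, ?_⟩⟩
  · rintro ⟨a, b⟩ hab
    obtain ⟨ha, rfl⟩ := mem_treeOf.1 hab
    simpa [hG.2] using (h.apply_ne ha).symm
  · exact fun v _ hv =>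
      ⟨σ v, mem_treeOf.2 ⟨hv, rfl⟩, fun w hw => (mem_treeOf.1 hw).2.symm⟩
  · exact fun k hk => (mem_treeOf.1 hk).1 rfl
  · exact fun v _ => Relation.ReflTransGen.mono (fun _ _ => mem_treeOf.2) _ _ (h v)

theorem exists_eq_treeOf (hv : G.verts = Finset.univ) {T : Finset (Fin n × Fin n)}
    (hT : G.IsSpanTree r T) :
    ∃ τ : Fin n → Fin n, (∀ v, v ≠ r → (v, τ v) ∈ T) ∧ T = treeOf r τ := by
  have hsucc (v : Fin n) (hvr : v ≠ r) : ∃! w, (v, w) ∈ T :=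
    hT.2.1 v (hv ▸ Finset.mem_univ v) hvr
  choose! τ hτ using hsucc
  refine ⟨τ, fun v hvr => (hτ v hvr).1, ?_⟩
  ext ⟨a, b⟩
  rw [mem_treeOf]
  refine ⟨fun hab => ?_, fun ⟨ha, hb⟩ => hb ▸ (hτ a ha).1⟩
  have ha : a ≠ r := by rintro rfl; exact hT.2.2.1 b hab
  exact ⟨ha, ((hτ a ha).2 b hab).symm⟩

theorem price_eq_sum_of_support {b : Fin n × Fin n → ℝ}
    {S : Finset (Finset (Fin n × Fin n))}
    (hS : ∀ T, G.IsSpanTree r T → (∀ f ∈ T, b f ≠ 0) → T ∈ S) :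
    G.price r b = ∑ T ∈ S with G.IsSpanTree r T, ∏ f ∈ T, b f := by
  set A := G.edges.powerset.filter (G.IsSpanTree r)
  set B := S.filter (G.IsSpanTree r)
  have hA : ∑ T ∈ A ∩ B, ∏ f ∈ T, b f = ∑ T ∈ A, ∏ f ∈ T, b f := by
    refine Finset.sum_subset Finset.inter_subset_left fun T hT hT' => ?_
    by_contra h
    refine hT' (Finset.mem_inter.2
      ⟨hT, Finset.mem_filter.2 ⟨?_, (Finset.mem_filter.1 hT).2⟩⟩)
    exact hS T (Finset.mem_filter.1 hT).2 (Finset.prod_ne_zero_iff.1 h)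
  have hB : ∑ T ∈ A ∩ B, ∏ f ∈ T, b f = ∑ T ∈ B, ∏ f ∈ T, b f := by
    refine Finset.sum_subset Finset.inter_subset_right fun T hT hT' => ?_
    have hST := (Finset.mem_filter.1 hT).2
    exact absurd (Finset.mem_inter.2
      ⟨Finset.mem_filter.2 ⟨Finset.mem_powerset.2 hST.1, hST⟩, hT⟩) hT'
  exact hA.symm.trans hB

theorem price_pos_s19 (hG : G.IsComplete) {b : Fin n × Fin n → ℝ}
    (hb : ∀ f ∈ G.edges, 0 < b f) : 0 < G.price r b := by
  have hstar : G.IsSpanTree r (treeOf r fun _ => r) :=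
    (isSpanTree_treeOf_iff hG).2 <|
      FlowsTo.of_rank (fun v => if v = r then 0 else 1) (by simp_all)
  refine Finset.sum_pos' (fun T hT => Finset.prod_nonneg fun f hf => (hb f ?_).le)
    ⟨_, Finset.mem_filter.2 ⟨Finset.mem_powerset.2 hstar.1, hstar⟩,
      Finset.prod_pos fun f hf => hb f (hstar.1 hf)⟩
  exact (Finset.mem_filter.1 hT).2.1 hf

theorem price_update_of_fst_eq {b : Fin n × Fin n → ℝ} {e : Fin n × Fin n} (he : e.1 = r)
    (t : ℝ) : G.price r (Function.update b e t) = G.price r b := by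
  refine Finset.sum_congr rfl fun T hT => Finset.prod_congr rfl fun f hf => ?_
  refine Function.update_of_ne (fun hfe => (Finset.mem_filter.1 hT).2.2.2.1 f.2 ?_) _ _
  rwa [← he, ← hfe]

theorem price_lt_price_update {b : Fin n × Fin n → ℝ} (hb : ∀ f ∈ G.edges, 0 < b f)
    {T : Finset (Fin n × Fin n)} (hT : G.IsSpanTree r T) {e : Fin n × Fin n} (heT : e ∈ T)
    {t : ℝ} (ht : b e < t) : G.price r b < G.price r (Function.update b e t) := by
  have hle (f : Fin n × Fin n) : b f ≤ Function.update b e t f := by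
    by_cases hf : f = e
    · subst hf; simpa using ht.le
    · simp [hf]
  refine Finset.sum_lt_sum (fun T' hT' => Finset.prod_le_prod (fun f hf => (hb f ?_).le)
    fun f _ => hle f) ⟨T, Finset.mem_filter.2 ⟨Finset.mem_powerset.2 hT.1, hT⟩, ?_⟩
  · exact (Finset.mem_filter.1 hT').2.1 hf
  · exact Finset.prod_lt_prod (fun f hf => hb f (hT.1 hf)) (fun f _ => hle f)
      ⟨e, heT, by simpa using ht⟩

theorem continuous_price (G : Digraph n) (r : Fin n) : Continuous (G.price r) :=
  continuous_finsetSum _ fun _ _ => continuous_finsetProd _ fun f _ => continuous_apply f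

noncomputable def succWeight (σ : Fin n → Fin n) (e : Fin n × Fin n) (t : ℝ) :
    Fin n × Fin n → ℝ :=
  fun f => if f = e then t else if σ f.1 = f.2 then 1 else 0

theorem price_succWeight (hG : G.IsComplete) {e : Fin n × Fin n} (hr : e.1 ≠ r)
    (hσ : σ e.1 ≠ e.2) (t : ℝ) :
    G.price r (succWeight σ e t) = (if FlowsTo σ r then 1 else 0) +
      (if FlowsTo (Function.update σ e.1 e.2) r then t else 0) := by
  set σ' := Function.update σ e.1 e.2 with hσ'
  have hne (v : Fin n) : (v, σ v) ≠ e := fun h => hσ (by subst h; rfl)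
  have hsupp (T) (hT : G.IsSpanTree r T) (hnz : ∀ f ∈ T, succWeight σ e t f ≠ 0) :
      T ∈ ({treeOf r σ, treeOf r σ'} : Finset _) := by
    obtain ⟨τ, hτT, rfl⟩ := exists_eq_treeOf hG.1 hT
    have hτ (v : Fin n) (hv : v ≠ r) : (v, τ v) = e ∨ σ v = τ v := by
      have h := hnz _ (hτT v hv)
      simp only [succWeight] at h
      split_ifs at h <;> simp_all
    rw [Finset.mem_insert, Finset.mem_singleton]
    by_cases hk : τ e.1 = e.2
    · refine Or.inr (treeOf_congr fun v hv => ?_)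
      by_cases hve : v = e.1
      · rw [hσ', hve, hk, Function.update_self]
      · rw [hσ', Function.update_of_ne hve]
        exact ((hτ v hv).resolve_left fun h => hve (by subst h; rfl)).symm
    · refine Or.inl (treeOf_congr fun v hv => ?_)
      exact ((hτ v hv).resolve_left fun h => hk (by subst h; rfl)).symm
  have hσσ' : treeOf r σ ≠ treeOf r σ' := fun h => by
    have hmem : (e.1, σ e.1) ∈ treeOf r σ' := h ▸ mem_treeOf.2 ⟨hr, rfl⟩
    exact hσ (by simpa [σ'] using (mem_treeOf.1 hmem).2.symm)
  have hprod : ∏ v ∈ Finset.univ.erase r, succWeight σ e t (v, σ v) = 1 :=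
    Finset.prod_eq_one fun v _ => by simp [succWeight, hne v]
  have hprod' : ∏ v ∈ Finset.univ.erase r, succWeight σ e t (v, σ' v) = t := by
    rw [Finset.prod_eq_single_of_mem e.1 (by simpa using hr) fun v _ hve => ?_]
    · simp [succWeight, σ']
    · simp [succWeight, σ', Function.update_of_ne hve, hne v]
  rw [price_eq_sum_of_support hsupp, Finset.sum_filter, Finset.sum_pair hσσ',
    isSpanTree_treeOf_iff hG, isSpanTree_treeOf_iff hG, prod_treeOf, prod_treeOf, hprod,
    hprod']

theorem influential_of_continuousAt {f : (Fin n × Fin n → ℝ) → ℝ}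
    {b₀ : Fin n × Fin n → ℝ} (hb₀ : ∀ e', 0 ≤ b₀ e') {e : Fin n × Fin n} {c : ℝ} (hc : 0 < c)
    (hf₀ : ContinuousAt f b₀) (hf₁ : ContinuousAt f (Function.update b₀ e c))
    (hne : f b₀ ≠ f (Function.update b₀ e c)) : G.Influential f e := by
  set p : ℝ → Fin n × Fin n → ℝ := fun ε => b₀ + fun _ => ε
  have hp : Continuous p := continuous_const.add (continuous_pi fun _ => continuous_id)
  have hp0 : p 0 = b₀ := add_zero b₀
  have hg : ContinuousAt (fun ε => f (p ε) - f (Function.update (p ε) e c)) 0 :=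
    (hf₀.comp_of_eq hp.continuousAt hp0).sub
      (hf₁.comp_of_eq (hp.update e continuous_const).continuousAt (by rw [hp0]))
  have hg0 : f (p 0) - f (Function.update (p 0) e c) ≠ 0 := by rwa [hp0, sub_ne_zero]
  obtain ⟨ε, hε, hε0⟩ := ((hg.eventually_ne hg0).filter_mono nhdsWithin_le_nhds |>.and
    (self_mem_nhdsWithin (s := Set.Ioi 0))).exists
  have hpos (e' : Fin n × Fin n) : 0 < p ε e' := add_pos_of_nonneg_of_pos (hb₀ e') hε0
  refine ⟨p ε, Function.update (p ε) e c, fun e' _ => hpos e', fun e' _ => ?_,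
    fun e' he' => (Function.update_of_ne he' _ _).symm, sub_ne_zero.1 hε⟩
  by_cases he' : e' = e
  · rw [he', Function.update_self]; exact hc
  · rw [Function.update_of_ne he']; exact hpos e'

theorem influential_inv_iff {f : (Fin n × Fin n → ℝ) → ℝ} {e : Fin n × Fin n} :
    G.Influential (fun b => (f b)⁻¹) e ↔ G.Influential f e := by
  simp only [Influential, ne_eq, inv_inj]

theorem influential_priceRatio_comm {i j : Fin n} {e : Fin n × Fin n} :
    G.Influential (G.priceRatio j i) e ↔ G.Influential (G.priceRatio i j) e := by
  have h : G.priceRatio j i = fun b => (G.priceRatio i j b)⁻¹ :=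
    funext fun b => (inv_div _ _).symm
  rw [h, influential_inv_iff]

theorem continuousAt_priceRatio {i j : Fin n} {b : Fin n × Fin n → ℝ}
    (hb : G.price j b ≠ 0) : ContinuousAt (G.priceRatio i j) b :=
  (G.continuous_price i).continuousAt.div (G.continuous_price j).continuousAt hb

theorem influential_priceRatio_of_fst_eq (hG : G.IsComplete) {i j l : Fin n} (hij : i ≠ j)
    (hli : l ≠ i) : G.Influential (G.priceRatio i j) (i, l) := by
  set b : Fin n × Fin n → ℝ := fun _ => 1
  have hb : ∀ f ∈ G.edges, 0 < b f := fun _ _ => one_pos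
  have hT : G.IsSpanTree j (treeOf j (Function.update (fun _ => j) i l)) :=
    (isSpanTree_treeOf_iff hG).2 <| FlowsTo.of_rank
      (fun v => if v = j then 0 else if v = i then 2 else 1) fun v hv => by
        simp only [Function.update_apply]
        split_ifs <;> simp_all
  have hlt := price_lt_price_update hb hT
    ((mem_treeOf (a := i) (b := l)).2 ⟨hij, Function.update_self ..⟩) one_lt_two
  refine ⟨b, Function.update b (i, l) 2, hb, fun f _ => ?_,
    fun f hf => (Function.update_of_ne hf _ _).symm, ?_⟩
  · by_cases hf : f = (i, l) <;> simp [b, hf]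
  · rw [priceRatio, priceRatio, price_update_of_fst_eq (e := (i, l)) rfl]
    exact (div_lt_div_of_pos_left (price_pos_s19 hG hb) (price_pos_s19 hG hb) hlt).ne'

theorem influential_priceRatio_of_fst_ne (hG : G.IsComplete) {i j k l : Fin n} (hij : i ≠ j)
    (hki : k ≠ i) (hkj : k ≠ j) (hkl : k ≠ l) (hlj : l ≠ j) :
    G.Influential (G.priceRatio i j) (k, l) := by
  -- Along `σ` every vertex flows to `j`; redirecting `k` to `l` closes the cycle
  -- `k → l → ⋯ → i → k`, which avoids `j` but passes through `i`.
  set σ : Fin n → Fin n := fun v =>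
    if v = i then k else if v = k then j else if v = l ∨ v = j then i else j
  have hσk : σ k ≠ l := by simp [σ, hki, Ne.symm hlj]
  have hσj : FlowsTo σ j := FlowsTo.of_rank
    (fun v =>
      if v = j then 0 else if v = k then 1 else if v = i then 2 else if v = l then 3 else 1)
    fun v hv => by
      simp only [σ]
      split_ifs <;> simp_all
  have hσ'j : ¬FlowsTo (Function.update σ k l) j := by
    refine not_flowsTo_of_mapsTo (S := {i, k, l}) (v := i) (fun a ha => ?_)
      (by simp [Ne.symm hij, Ne.symm hkj, Ne.symm hlj]) (by simp)
    simp only [Set.mem_insert_iff, Set.mem_singleton_iff] at ha ⊢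
    rcases ha with ha | ha | ha <;> rw [ha]
    · simp [Function.update_of_ne (Ne.symm hki), σ]
    · simp
    · rw [Function.update_of_ne (Ne.symm hkl)]
      by_cases hli : l = i <;> simp [σ, hli, Ne.symm hkl]
  have hσ'i : FlowsTo (Function.update σ k l) i := FlowsTo.of_rank
    (fun v => if v = i then 0 else if v = k then 2 else if v = l ∨ v = j then 1 else 2)
    fun v hv => by
      simp only [σ, Function.update_apply]
      split_ifs <;> simp_all
  have hpi (t : ℝ) :
      G.price i (succWeight σ (k, l) t) = (if FlowsTo σ i then 1 else 0) + t := by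
    rw [price_succWeight hG hki hσk, if_pos hσ'i]
  have hpj (t : ℝ) : G.price j (succWeight σ (k, l) t) = 1 := by
    rw [price_succWeight hG hkj hσk, if_pos hσj, if_neg hσ'j, add_zero]
  have hupd : Function.update (succWeight σ (k, l) 1) (k, l) 2 = succWeight σ (k, l) 2 := by
    funext f
    by_cases hf : f = (k, l) <;> simp [succWeight, hf]
  refine influential_of_continuousAt (b₀ := succWeight σ (k, l) 1) (fun f => ?_) two_pos
    (continuousAt_priceRatio (by simp [hpj]))
    (continuousAt_priceRatio (by simp [hupd, hpj])) ?_
  · unfold succWeight; split_ifs <;> norm_num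
  · simp only [hupd, priceRatio, hpi, hpj]
    norm_num

theorem card_edges_of_isComplete (hG : G.IsComplete) : G.edges.card = n * (n - 1) := by
  have h : G.edges = (Finset.univ : Finset (Fin n)).offDiag := by
    ext ⟨a, b⟩
    simp [hG.2]
  rw [h, Finset.offDiag_card, Finset.card_univ, Fintype.card_fin, Nat.mul_sub_one]

end Digraph

end Money

theorem stmt19_general (m : ℕ) (G : Money.Digraph m)
    (hv : G.verts = Finset.univ)
    (he : G.edges = Finset.univ.filter fun e : Fin m × Fin m => e.1 ≠ e.2) :
    ∀ i j : Fin m, i ≠ j →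
      G.priceCplxPair i j = m * (m - 1) ∧
      ∀ e ∈ G.edges, G.Influential (G.priceRatio i j) e := by
  intro i j hij
  have hG : G.IsComplete := ⟨hv, he⟩
  have hinfl : ∀ e ∈ G.edges, G.Influential (G.priceRatio i j) e := by
    rintro ⟨k, l⟩ hkl
    have hkl : k ≠ l := G.no_loops _ hkl
    by_cases hki : k = i
    · subst hki
      exact influential_priceRatio_of_fst_eq hG hij hkl.symm
    by_cases hkj : k = j
    · subst hkj
      exact influential_priceRatio_comm.1 <|
        influential_priceRatio_of_fst_eq hG hij.symm hkl.symm
    by_cases hlj : l = j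
    · exact influential_priceRatio_comm.1 <|
        influential_priceRatio_of_fst_ne hG hij.symm hkj hki hkl (hlj ▸ hij.symm)
    · exact influential_priceRatio_of_fst_ne hG hij hki hkj hkl hlj
  refine ⟨?_, hinfl⟩
  rw [priceCplxPair, Finset.filter_true_of_mem hinfl, card_edges_of_isComplete hG]

/-- in the complete directed graph on `m ≥ 2` vertices, every
edge weight is influential for every price ratio, so `π_ij = m(m-1)` for all
`i ≠ j`. -/
theorem stmt19 (m : ℕ) (hm : 2 ≤ m) (G : Money.Digraph m)
    (hv : G.verts = Finset.univ)
    (he : G.edges = Finset.univ.filter fun e : Fin m × Fin m => e.1 ≠ e.2) :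
    ∀ i j : Fin m, i ≠ j →
      G.priceCplxPair i j = m * (m - 1) ∧
      ∀ e ∈ G.edges, G.Influential (G.priceRatio i j) e :=
  stmt19_general m G hv he
end
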